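/- arXiv:1109.2557 — 6 statements merged into one kernel-verified Lean document; each statement's English description precedes it below -/
import Mathlib

section
/- Let C > 0. There exists a constant K > 0 depending only on C such that the following holds for every positive integer N, every s ∈ [t0, T*) with ϱ(s)+1 ≤ N, and every three times continuously differentiable function g : [T_{ℓ(s)}, T_{ϱ(s)+1}] → ℝ satisfying |g(u)| ≤ C, |g'(u)| ≤ C, |g''(u)| ≤ C, |g'''(u)| ≤ C on that interval. Set θ = (T_{ϱ(s)} − s)/Δ and β₁ = 5/12 + (5/12)θ + (1/6)θ², β₂ = 2/3 − (1/3)θ − (1/3)θ², β₃ = −1/12 − (1/12)θ + (1/6)θ². Then |∫_s^{T_{ℓ(s)}} g(u) du − (T_{ℓ(s)} − s)(β₁ g(T_{ℓ(s)}) + β₂ g(T_{ϱ(s)}) + β₃ g(T_{ϱ(s)+1}))| ≤ K Δ⁴, uniformly in s and Δ. -/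
/-!
The rule is exact on quadratics, so its error on `g` is its error on the remainder `R` of the
second-order Taylor expansion of `g` at `T_ℓ`. This `R` vanishes at `T_ℓ`, which removes the `β₁`
term, and satisfies `|R u| ≤ (C/2) (u - T_ℓ)³`. As `β₂, β₃` are bounded for `θ ∈ [0, 1]` and
`|T_ℓ - s| ≤ Δ`, the remaining terms are `O(C Δ⁴)`.
-/

/-- The maturity-time grid node `T_i = t0 + i·Δ` with `Δ = (T* − t0)/N`. -/
noncomputable def Tgrid (t0 Tstar : ℝ) (N i : ℕ) : ℝ := t0 + i * ((Tstar - t0) / N)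

open Set MeasureTheory intervalIntegral

namespace LeftNodeQuadrature

noncomputable def weight₁ (θ : ℝ) : ℝ := 5/12 + 5/12 * θ + 1/6 * θ^2

noncomputable def weight₂ (θ : ℝ) : ℝ := 2/3 - 1/3 * θ - 1/3 * θ^2

noncomputable def weight₃ (θ : ℝ) : ℝ := -(1/12) - 1/12 * θ + 1/6 * θ^2

/-- With `a = T_ℓ` and `a + Δ = T_ϱ`, the ratio `(a + Δ - s) / Δ` is the paper's `θ`. -/
noncomputable def error (f : ℝ → ℝ) (a Δ s : ℝ) : ℝ :=
  (∫ u in s..a, f u) - (a - s) *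
    (weight₁ ((a + Δ - s) / Δ) * f a + weight₂ ((a + Δ - s) / Δ) * f (a + Δ) +
      weight₃ ((a + Δ - s) / Δ) * f (a + 2 * Δ))

theorem error_sub {f g : ℝ → ℝ} {a s : ℝ} (hf : IntervalIntegrable f volume s a)
    (hg : IntervalIntegrable g volume s a) (Δ : ℝ) :
    error (f - g) a Δ s = error f a Δ s - error g a Δ s := by
  simp only [error, Pi.sub_apply, integral_sub hf hg]
  ring

theorem integral_quadratic (a s c₀ c₁ c₂ : ℝ) :
    ∫ u in s..a, c₀ + c₁ * (u - a) + c₂ * (u - a) ^ 2 =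
      -(c₀ * (s - a) + c₁ * (s - a) ^ 2 / 2 + c₂ * (s - a) ^ 3 / 3) := by
  have hF : ∀ x, HasDerivAt (fun u => c₀ * (u - a) + c₁ * (u - a) ^ 2 / 2 + c₂ * (u - a) ^ 3 / 3)
      (c₀ + c₁ * (x - a) + c₂ * (x - a) ^ 2) x := fun x => by
    have h := (hasDerivAt_id' x).sub_const a
    exact (((h.const_mul c₀).fun_add ((h.fun_pow 2).const_mul c₁ |>.div_const 2)).fun_add
      ((h.fun_pow 3).const_mul c₂ |>.div_const 3)).congr_deriv (by norm_num; ring)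
  rw [integral_eq_sub_of_hasDerivAt (fun x _ => hF x)
    ((by fun_prop : Continuous _).intervalIntegrable _ _)]
  ring

theorem error_quadratic {Δ : ℝ} (hΔ : Δ ≠ 0) (a s c₀ c₁ c₂ : ℝ) :
    error (fun x => c₀ + c₁ * (x - a) + c₂ * (x - a) ^ 2) a Δ s = 0 := by
  rw [error, integral_quadratic]
  simp only [weight₁, weight₂, weight₃]
  field_simp
  ring

theorem abs_weight₂_le {θ : ℝ} (h₀ : 0 ≤ θ) (h₁ : θ ≤ 1) : |weight₂ θ| ≤ 2/3 := by
  rw [weight₂, abs_le]; constructor <;> nlinarith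

theorem abs_weight₃_le {θ : ℝ} (h₀ : 0 ≤ θ) (h₁ : θ ≤ 1) : |weight₃ θ| ≤ 1/8 := by
  rw [weight₃, abs_le]; constructor <;> nlinarith [sq_nonneg (θ - 1/4)]

theorem abs_sub_taylor_quadratic_le {f : ℝ → ℝ} {a b C x : ℝ} (hab : a ≤ b)
    (hf : ContDiffOn ℝ 3 f (Icc a b))
    (hC : ∀ y ∈ Icc a b, |iteratedDerivWithin 3 f (Icc a b) y| ≤ C) (hx : x ∈ Icc a b) :
    |f x - (f a + derivWithin f (Icc a b) a * (x - a) +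
        iteratedDerivWithin 2 f (Icc a b) a / 2 * (x - a) ^ 2)| ≤ C / 2 * (x - a) ^ 3 := by
  have h := taylor_mean_remainder_bound (n := 2) hab hf hx hC
  simp only [taylor_within_apply, Finset.sum_range_succ, Finset.range_one, Finset.sum_singleton,
    Nat.factorial, Nat.cast_one, inv_one, pow_zero, pow_one, one_mul, mul_one,
    smul_eq_mul, iteratedDerivWithin_zero, iteratedDerivWithin_one, Real.norm_eq_abs] at h
  convert h using 3 <;> ring

theorem abs_error_le_of_abs_le_cube {R : ℝ → ℝ} {a Δ s M : ℝ} (hΔ : 0 < Δ) (has : a ≤ s)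
    (hsa : s ≤ a + Δ) (hR₀ : R a = 0)
    (hR : ∀ x ∈ Icc a (a + 2 * Δ), |R x| ≤ M * (x - a) ^ 3) :
    |error R a Δ s| ≤ 3 * M * Δ ^ 4 := by
  have hM : 0 ≤ M := nonneg_of_mul_nonneg_left
    ((abs_nonneg _).trans (hR (a + 2 * Δ) ⟨by linarith, le_rfl⟩)) (by simp [hΔ])
  have hint : |∫ u in s..a, R u| ≤ M * Δ ^ 3 * Δ := by
    rw [integral_symm, abs_neg]
    calc ‖∫ u in a..s, R u‖ ≤ M * Δ ^ 3 * |s - a| := by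
          refine norm_integral_le_of_norm_le_const fun x hx => ?_
          rw [uIoc_of_le has] at hx
          calc ‖R x‖ ≤ M * (x - a) ^ 3 := hR x ⟨hx.1.le, by linarith [hx.2]⟩
            _ ≤ M * Δ ^ 3 := by gcongr <;> linarith [hx.1, hx.2]
      _ ≤ M * Δ ^ 3 * Δ := by gcongr; rw [abs_of_nonneg] <;> linarith
  have hR₁ : |R (a + Δ)| ≤ M * Δ ^ 3 := by
    simpa using hR (a + Δ) ⟨by linarith, by linarith⟩
  have hR₂ : |R (a + 2 * Δ)| ≤ 8 * M * Δ ^ 3 := by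
    convert hR (a + 2 * Δ) ⟨by linarith, le_rfl⟩ using 1; ring
  set θ := (a + Δ - s) / Δ
  have hθ₀ : 0 ≤ θ := div_nonneg (by linarith) hΔ.le
  have hθ₁ : θ ≤ 1 := (div_le_one hΔ).2 (by linarith)
  have has' : |a - s| ≤ Δ := by rw [abs_sub_comm, abs_of_nonneg] <;> linarith
  have hnodes : |weight₂ θ * R (a + Δ) + weight₃ θ * R (a + 2 * Δ)| ≤ 5/3 * M * Δ ^ 3 :=
    calc _ ≤ |weight₂ θ| * |R (a + Δ)| + |weight₃ θ| * |R (a + 2 * Δ)| := by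
          rw [← abs_mul, ← abs_mul]; exact abs_add_le _ _
      _ ≤ 2/3 * (M * Δ ^ 3) + 1/8 * (8 * M * Δ ^ 3) := by
          gcongr
          exacts [abs_weight₂_le hθ₀ hθ₁, abs_weight₃_le hθ₀ hθ₁]
      _ = 5/3 * M * Δ ^ 3 := by ring
  calc |error R a Δ s|
      = |(∫ u in s..a, R u) - (a - s) * (weight₂ θ * R (a + Δ) + weight₃ θ * R (a + 2 * Δ))| := by
        simp only [error, hR₀, mul_zero, zero_add, θ]
    _ ≤ |∫ u in s..a, R u| + |a - s| * |weight₂ θ * R (a + Δ) + weight₃ θ * R (a + 2 * Δ)| := by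
        rw [← abs_mul]; exact abs_sub _ _
    _ ≤ M * Δ ^ 3 * Δ + Δ * (5/3 * M * Δ ^ 3) := by gcongr
    _ ≤ 3 * M * Δ ^ 4 := by nlinarith [pow_pos hΔ 4]

theorem abs_error_le {g : ℝ → ℝ} {a Δ s C : ℝ} (hΔ : 0 < Δ) (has : a ≤ s) (hsa : s ≤ a + Δ)
    (hg : ContDiffOn ℝ 3 g (Icc a (a + 2 * Δ)))
    (hC : ∀ y ∈ Icc a (a + 2 * Δ), |iteratedDerivWithin 3 g (Icc a (a + 2 * Δ)) y| ≤ C) :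
    |error g a Δ s| ≤ 3 / 2 * C * Δ ^ 4 := by
  set I := Icc a (a + 2 * Δ)
  set P : ℝ → ℝ := fun x =>
    g a + derivWithin g I a * (x - a) + iteratedDerivWithin 2 g I a / 2 * (x - a) ^ 2
  have hsI : uIcc s a ⊆ I := by
    rw [uIcc_of_ge has]; exact Icc_subset_Icc le_rfl (by linarith)
  have hgP : error g a Δ s = error (g - P) a Δ s :=
    calc error g a Δ s = error g a Δ s - error P a Δ s := by
          rw [error_quadratic hΔ.ne', sub_zero]
      _ = error (g - P) a Δ s :=
          (error_sub ((hg.continuousOn.mono hsI).intervalIntegrable)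
            ((by fun_prop : Continuous P).intervalIntegrable _ _) Δ).symm
  have hR : ∀ x ∈ I, |(g - P) x| ≤ C / 2 * (x - a) ^ 3 := fun x hx =>
    abs_sub_taylor_quadratic_le (by linarith) hg hC hx
  rw [hgP]
  convert abs_error_le_of_abs_le_cube hΔ has hsa (by simp [P]) hR using 1
  ring

end LeftNodeQuadrature

open LeftNodeQuadrature

/-- Order-four error bound, uniform in `s` and `Δ`, for the three-node quadrature rule
with target node `T_{ℓ(s)}` and weights
`β₁ = 5/12 + (5/12)θ + (1/6)θ²`, `β₂ = 2/3 − (1/3)θ − (1/3)θ²`,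
`β₃ = −1/12 − (1/12)θ + (1/6)θ²`, where `θ = (T_{ϱ(s)} − s)/Δ`. -/
theorem quadrature_left_node_order_four (C : ℝ) (hC : 0 < C) :
    ∃ K > 0, ∀ (t0 Tstar : ℝ), t0 < Tstar → ∀ N : ℕ, 0 < N →
      ∀ s : ℝ, t0 ≤ s → s < Tstar →
      ∀ ℓ : ℕ, Tgrid t0 Tstar N ℓ ≤ s → s < Tgrid t0 Tstar N (ℓ + 1) → ℓ + 2 ≤ N →
      ∀ g : ℝ → ℝ,
        ContDiffOn ℝ 3 g (Set.Icc (Tgrid t0 Tstar N ℓ) (Tgrid t0 Tstar N (ℓ + 2))) →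
        (∀ j : ℕ, j ≤ 3 →
          ∀ u ∈ Set.Icc (Tgrid t0 Tstar N ℓ) (Tgrid t0 Tstar N (ℓ + 2)),
            |iteratedDerivWithin j g
                (Set.Icc (Tgrid t0 Tstar N ℓ) (Tgrid t0 Tstar N (ℓ + 2))) u| ≤ C) →
        let Δ : ℝ := (Tstar - t0) / N
        let θ : ℝ := (Tgrid t0 Tstar N (ℓ + 1) - s) / Δ
        |(∫ u in s..(Tgrid t0 Tstar N ℓ), g u) -
            (Tgrid t0 Tstar N ℓ - s) *
              ((5/12 + 5/12 * θ + 1/6 * θ^2) * g (Tgrid t0 Tstar N ℓ) +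
               (2/3 - 1/3 * θ - 1/3 * θ^2) * g (Tgrid t0 Tstar N (ℓ + 1)) +
               (-(1/12) - 1/12 * θ + 1/6 * θ^2) * g (Tgrid t0 Tstar N (ℓ + 2)))|
          ≤ K * Δ^4 := by
  refine ⟨3 / 2 * C, by positivity, ?_⟩
  intro t0 Tstar hts N hN s _ _ ℓ hℓs hsℓ _ g hg hC₃ Δ θ
  have hΔ : 0 < Δ := div_pos (sub_pos.2 hts) (Nat.cast_pos.2 hN)
  have hT₁ : Tgrid t0 Tstar N (ℓ + 1) = Tgrid t0 Tstar N ℓ + Δ := by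
    simp only [Tgrid, Δ]; push_cast; ring
  have hT₂ : Tgrid t0 Tstar N (ℓ + 2) = Tgrid t0 Tstar N ℓ + 2 * Δ := by
    simp only [Tgrid, Δ]; push_cast; ring
  rw [hT₁] at hsℓ
  rw [hT₂] at hg hC₃
  simpa only [error, weight₁, weight₂, weight₃, θ, hT₁, hT₂]
    using abs_error_le hΔ hℓs hsℓ.le hg (hC₃ 3 le_rfl)
end

section
/- Let C > 0. There exists a constant K > 0 depending only on C such that the following holds for every positive integer N, every s ∈ [t0, T*) with ϱ(s)+1 ≤ N, and every three times continuously differentiable function g : [T_{ℓ(s)}, T_{ϱ(s)+1}] → ℝ satisfying |g(u)| ≤ C, |g'(u)| ≤ C, |g''(u)| ≤ C, |g'''(u)| ≤ C on that interval. Set θ = (T_{ϱ(s)} − s)/Δ and β₁ = (1/4)θ + (1/6)θ², β₂ = 1 − (1/3)θ², β₃ = −(1/4)θ + (1/6)θ². Then |∫_s^{T_{ϱ(s)}} g(u) du − (T_{ϱ(s)} − s)(β₁ g(T_{ℓ(s)}) + β₂ g(T_{ϱ(s)}) + β₃ g(T_{ϱ(s)+1}))| ≤ K Δ⁴, uniformly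 in s and Δ. -/
/-!
The weights are those that make the rule exact on quadratic polynomials. Subtracting the
second-order Taylor polynomial of `g` at `T_ℓ` therefore leaves only the remainder, which is
`O(Δ³)` on `[T_ℓ, T_ℓ + 2Δ]` by the Lagrange bound. For `θ ∈ [0, 1]` the weights sum in absolute
value to at most `2`, so both the integral of the remainder over `[s, T_ℓ + Δ]` and the rule
applied to it are `O(Δ) · O(Δ³)`.
-/

open Set

/-- The paper's rule with `c = T_{ℓ(s)}`, so that the target node `c + Δ` is `T_{ϱ(s)}`. -/
noncomputable def middleNodeRule (c Δ s : ℝ) (f : ℝ → ℝ) : ℝ :=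
  let θ := (c + Δ - s) / Δ
  (c + Δ - s) * ((1/4 * θ + 1/6 * θ^2) * f c + (1 - 1/3 * θ^2) * f (c + Δ) +
    (-(1/4) * θ + 1/6 * θ^2) * f (c + 2 * Δ))

lemma integral_quadratic_eq_middleNodeRule (a b d c Δ s : ℝ) (hΔ : Δ ≠ 0) :
    ∫ u in s..c + Δ, (a + b * (u - c) + d * (u - c) ^ 2) =
      middleNodeRule c Δ s fun u => a + b * (u - c) + d * (u - c) ^ 2 := by
  have hQ : ∀ u, HasDerivAt (fun u => a * (u - c) + b * (u - c) ^ 2 / 2 + d * (u - c) ^ 3 / 3)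
      (a + b * (u - c) + d * (u - c) ^ 2) u := by
    intro u
    have h := (hasDerivAt_id' u).sub_const c
    exact (((h.const_mul a).add (((h.pow 2).const_mul b).div_const 2)).add
      (((h.pow 3).const_mul d).div_const 3)).congr_deriv
        (by simp only [mul_one, Nat.cast_ofNat, Nat.add_one_sub_one, pow_one]; ring)
  rw [intervalIntegral.integral_eq_sub_of_hasDerivAt (fun u _ => hQ u)
    ((Continuous.intervalIntegrable (by fun_prop) _ _))]
  simp only [middleNodeRule]
  field_simp
  ring

lemma middleNodeRule_sub (c Δ s : ℝ) (f g : ℝ → ℝ) :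
    middleNodeRule c Δ s (f - g) = middleNodeRule c Δ s f - middleNodeRule c Δ s g := by
  simp only [middleNodeRule, Pi.sub_apply]
  ring

lemma abs_middleNodeRule_le {f : ℝ → ℝ} {c Δ s E : ℝ} (hΔ : 0 < Δ) (hcs : c ≤ s)
    (hs : s ≤ c + Δ) (hf : ∀ u ∈ Icc c (c + 2 * Δ), |f u| ≤ E) :
    |middleNodeRule c Δ s f| ≤ 2 * Δ * E := by
  set θ := (c + Δ - s) / Δ
  have hθ₀ : 0 ≤ θ := div_nonneg (by linarith) hΔ.le
  have hθ₁ : θ ≤ 1 := (div_le_one hΔ).2 (by linarith)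
  have hw₁ : |1/4 * θ + 1/6 * θ^2| ≤ 1/2 := by rw [abs_le]; constructor <;> nlinarith
  have hw₂ : |1 - 1/3 * θ^2| ≤ 1 := by rw [abs_le]; constructor <;> nlinarith
  have hw₃ : |-(1/4) * θ + 1/6 * θ^2| ≤ 1/2 := by rw [abs_le]; constructor <;> nlinarith
  have h₁ := hf c ⟨le_rfl, by linarith⟩
  have h₂ := hf (c + Δ) ⟨by linarith, by linarith⟩
  have h₃ := hf (c + 2 * Δ) ⟨by linarith, le_rfl⟩
  have hsum : |(1/4 * θ + 1/6 * θ^2) * f c + (1 - 1/3 * θ^2) * f (c + Δ) +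
      (-(1/4) * θ + 1/6 * θ^2) * f (c + 2 * Δ)| ≤ 2 * E := by
    calc _ ≤ |1/4 * θ + 1/6 * θ^2| * |f c| + |1 - 1/3 * θ^2| * |f (c + Δ)| +
          |-(1/4) * θ + 1/6 * θ^2| * |f (c + 2 * Δ)| := by
          simp only [← abs_mul]; exact abs_add_three _ _ _
      _ ≤ 1/2 * E + 1 * E + 1/2 * E := by gcongr
      _ = 2 * E := by ring
  calc |middleNodeRule c Δ s f| = |c + Δ - s| * |(1/4 * θ + 1/6 * θ^2) * f c +
        (1 - 1/3 * θ^2) * f (c + Δ) + (-(1/4) * θ + 1/6 * θ^2) * f (c + 2 * Δ)| := abs_mul _ _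
    _ ≤ Δ * (2 * E) := by
        rw [abs_of_nonneg (by linarith)]
        gcongr
        linarith
    _ = 2 * Δ * E := by ring

lemma taylorWithinEval_two (g : ℝ → ℝ) (I : Set ℝ) (c : ℝ) :
    taylorWithinEval g 2 I c = fun u => g c + iteratedDerivWithin 1 g I c * (u - c) +
      iteratedDerivWithin 2 g I c / 2 * (u - c) ^ 2 := by
  ext u
  simp only [taylorWithinEval_succ, taylor_within_apply, zero_add, Finset.range_one, smul_eq_mul,
    Finset.sum_singleton, Nat.factorial_zero, Nat.cast_one, inv_one, pow_zero, mul_one,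
    iteratedDerivWithin_zero, one_mul, CharP.cast_eq_zero, pow_one, iteratedDerivWithin_one,
    Nat.factorial_one, Nat.reduceAdd]
  ring

lemma abs_sub_taylorWithinEval_two_le {g : ℝ → ℝ} {a b M : ℝ} (hab : a ≤ b)
    (hg : ContDiffOn ℝ 3 g (Icc a b))
    (hM : ∀ u ∈ Icc a b, |iteratedDerivWithin 3 g (Icc a b) u| ≤ M) {u : ℝ} (hu : u ∈ Icc a b) :
    |g u - taylorWithinEval g 2 (Icc a b) a u| ≤ M * (b - a) ^ 3 / 2 :=
  calc |g u - taylorWithinEval g 2 (Icc a b) a u| ≤ M * (u - a) ^ 3 / 2 :=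
        taylor_mean_remainder_bound (n := 2) hab hg hu hM
    _ ≤ M * (b - a) ^ 3 / 2 := by
        have hM₀ : 0 ≤ M := (abs_nonneg _).trans (hM a ⟨le_rfl, hab⟩)
        gcongr
        · linarith [hu.1]
        · exact hu.2

theorem abs_integral_sub_middleNodeRule_le {g : ℝ → ℝ} {c Δ s M : ℝ} (hΔ : 0 < Δ)
    (hcs : c ≤ s) (hs : s ≤ c + Δ) (hg : ContDiffOn ℝ 3 g (Icc c (c + 2 * Δ)))
    (hM : ∀ u ∈ Icc c (c + 2 * Δ), |iteratedDerivWithin 3 g (Icc c (c + 2 * Δ)) u| ≤ M) :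
    |(∫ u in s..c + Δ, g u) - middleNodeRule c Δ s g| ≤ 12 * M * Δ ^ 4 := by
  set I := Icc c (c + 2 * Δ)
  set P := taylorWithinEval g 2 I c
  have hR : ∀ u ∈ I, |(g - P) u| ≤ 4 * M * Δ ^ 3 := fun u hu => by
    have := abs_sub_taylorWithinEval_two_le (by linarith) hg hM hu
    rw [Pi.sub_apply]; convert this using 1; ring
  have hsI : uIcc s (c + Δ) ⊆ I := by
    rw [uIcc_of_le hs]; exact Icc_subset_Icc hcs (by linarith)
  have hPcont : Continuous P := by simp only [P, taylorWithinEval_two]; fun_prop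
  have hPexact : ∫ u in s..c + Δ, P u = middleNodeRule c Δ s P := by
    simp only [P, taylorWithinEval_two]
    exact integral_quadratic_eq_middleNodeRule _ _ _ c Δ s hΔ.ne'
  have hsplit : (∫ u in s..c + Δ, g u) - middleNodeRule c Δ s g =
      (∫ u in s..c + Δ, (g - P) u) - middleNodeRule c Δ s (g - P) := by
    rw [Pi.sub_def, intervalIntegral.integral_sub
      ((hg.continuousOn.mono hsI).intervalIntegrable) (hPcont.intervalIntegrable _ _),
      ← Pi.sub_def, middleNodeRule_sub, hPexact]
    ring
  have hint : |∫ u in s..c + Δ, (g - P) u| ≤ 4 * M * Δ ^ 3 * Δ :=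
    calc |∫ u in s..c + Δ, (g - P) u| ≤ 4 * M * Δ ^ 3 * |c + Δ - s| := by
          rw [← Real.norm_eq_abs]
          exact intervalIntegral.norm_integral_le_of_norm_le_const fun u hu =>
            hR u (hsI (uIoc_subset_uIcc hu))
      _ ≤ 4 * M * Δ ^ 3 * Δ := by
          have hE : 0 ≤ 4 * M * Δ ^ 3 := (abs_nonneg _).trans (hR c ⟨le_rfl, by linarith⟩)
          rw [abs_of_nonneg (by linarith)]
          gcongr
          linarith
  calc |(∫ u in s..c + Δ, g u) - middleNodeRule c Δ s g|
      ≤ |∫ u in s..c + Δ, (g - P) u| + |middleNodeRule c Δ s (g - P)| := by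
        rw [hsplit]; exact abs_sub _ _
    _ ≤ 4 * M * Δ ^ 3 * Δ + 2 * Δ * (4 * M * Δ ^ 3) :=
        add_le_add hint (abs_middleNodeRule_le hΔ hcs hs hR)
    _ = 12 * M * Δ ^ 4 := by ring

/-- Order-four error bound, uniform in `s` and `Δ`, for the three-node quadrature rule
with target node `T_{ϱ(s)}` and weights
`β₁ = (1/4)θ + (1/6)θ²`, `β₂ = 1 − (1/3)θ²`, `β₃ = −(1/4)θ + (1/6)θ²`,
where `θ = (T_{ϱ(s)} − s)/Δ`. -/
theorem quadrature_middle_node_order_four (C : ℝ) (hC : 0 < C) :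
    ∃ K > 0, ∀ (t0 Tstar : ℝ), t0 < Tstar → ∀ N : ℕ, 0 < N →
      ∀ s : ℝ, t0 ≤ s → s < Tstar →
      ∀ ℓ : ℕ, Tgrid t0 Tstar N ℓ ≤ s → s < Tgrid t0 Tstar N (ℓ + 1) → ℓ + 2 ≤ N →
      ∀ g : ℝ → ℝ,
        ContDiffOn ℝ 3 g (Set.Icc (Tgrid t0 Tstar N ℓ) (Tgrid t0 Tstar N (ℓ + 2))) →
        (∀ j : ℕ, j ≤ 3 →
          ∀ u ∈ Set.Icc (Tgrid t0 Tstar N ℓ) (Tgrid t0 Tstar N (ℓ + 2)),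
            |iteratedDerivWithin j g
                (Set.Icc (Tgrid t0 Tstar N ℓ) (Tgrid t0 Tstar N (ℓ + 2))) u| ≤ C) →
        let Δ : ℝ := (Tstar - t0) / N
        let θ : ℝ := (Tgrid t0 Tstar N (ℓ + 1) - s) / Δ
        |(∫ u in s..(Tgrid t0 Tstar N (ℓ + 1)), g u) -
            (Tgrid t0 Tstar N (ℓ + 1) - s) *
              ((1/4 * θ + 1/6 * θ^2) * g (Tgrid t0 Tstar N ℓ) +
               (1 - 1/3 * θ^2) * g (Tgrid t0 Tstar N (ℓ + 1)) +
               (-(1/4) * θ + 1/6 * θ^2) * g (Tgrid t0 Tstar N (ℓ + 2)))|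
          ≤ K * Δ^4 := by
  refine ⟨12 * C, by positivity, ?_⟩
  intro t0 Tstar hlt N hN s _ _ ℓ hℓs hsℓ _ g hg hbound Δ θ
  have hΔ : 0 < Δ := div_pos (sub_pos.2 hlt) (Nat.cast_pos.2 hN)
  have hnext : Tgrid t0 Tstar N (ℓ + 1) = Tgrid t0 Tstar N ℓ + Δ := by
    simp only [Tgrid, Δ]; push_cast; ring
  have hnext₂ : Tgrid t0 Tstar N (ℓ + 2) = Tgrid t0 Tstar N ℓ + 2 * Δ := by
    simp only [Tgrid, Δ]; push_cast; ring
  simp only [θ]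
  rw [hnext] at hsℓ ⊢
  rw [hnext₂] at hg hbound ⊢
  exact abs_integral_sub_middleNodeRule_le hΔ hℓs hsℓ.le hg (hbound 3 le_rfl)
end

section
/- Let C > 0. There exists a constant K > 0 depending only on C such that the following holds for every positive integer N, every s ∈ [t0, T*) with ϱ(s)+1 ≤ N, and every three times continuously differentiable function g : [T_{ℓ(s)}, T_{ϱ(s)+1}] → ℝ satisfying |g(u)| ≤ C, |g'(u)| ≤ C, |g''(u)| ≤ C, |g'''(u)| ≤ C on that interval. Set θ = (T_{ϱ(s)} − s)/Δ and β₁ = −1/12 + (1/12)θ + (1/6)θ², β₂ = 2/3 + (1/3)θ − (1/3)θ², β₃ = 5/12 − (5/12)θ + (1/6)θ². Then |∫_s^{T_{ϱ(s)+1}} g(u) du − (T_{ϱ(s)+1} − s)(β₁ g(T_{ℓ(s)}) + β₂ g(T_{ϱ(s)}) + β₃ g(T_{ϱ(s)+1}))| ≤ K Δ⁴, uniformly in s and Δ. -/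
open Set MeasureTheory

lemma Tgrid_add (t0 Tstar : ℝ) (N i k : ℕ) :
    Tgrid t0 Tstar N (i + k) = Tgrid t0 Tstar N i + k * ((Tstar - t0) / N) := by
  simp only [Tgrid]
  push_cast
  ring

/-- The paper's rule with `a = T_{ℓ(s)}` and `d = Δ`, so that `θ = (T_{ϱ(s)} − s)/Δ`. -/
noncomputable def rightNodeRule (a d s : ℝ) (f : ℝ → ℝ) : ℝ :=
  let θ := (a + d - s) / d
  (a + 2 * d - s) *
    ((-(1/12) + 1/12 * θ + 1/6 * θ^2) * f a + (2/3 + 1/3 * θ - 1/3 * θ^2) * f (a + d) +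
      (5/12 - 5/12 * θ + 1/6 * θ^2) * f (a + 2 * d))

lemma rightNodeRule_sub (a d s : ℝ) (f p : ℝ → ℝ) :
    rightNodeRule a d s (f - p) = rightNodeRule a d s f - rightNodeRule a d s p := by
  simp only [rightNodeRule, Pi.sub_apply]
  ring

lemma integral_quadratic_eq_rightNodeRule {d : ℝ} (hd : d ≠ 0) (a s c₀ c₁ c₂ : ℝ) :
    ∫ u in s..a + 2 * d, (c₀ + c₁ * (u - a) + c₂ * (u - a) ^ 2) =
      rightNodeRule a d s fun u => c₀ + c₁ * (u - a) + c₂ * (u - a) ^ 2 := by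
  have hF : ∀ x, HasDerivAt (fun u => c₀ * (u - a) + c₁ / 2 * (u - a) ^ 2 + c₂ / 3 * (u - a) ^ 3)
      (c₀ + c₁ * (x - a) + c₂ * (x - a) ^ 2) x := fun x => by
    have h := (hasDerivAt_id x).sub_const a
    exact (((h.const_mul c₀).add ((h.pow 2).const_mul (c₁ / 2))).add
      ((h.pow 3).const_mul (c₂ / 3))).congr_deriv (by simp only [id]; push_cast; ring)
  rw [intervalIntegral.integral_eq_sub_of_hasDerivAt (fun x _ => hF x)
    (by apply Continuous.intervalIntegrable; fun_prop), rightNodeRule]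
  field_simp
  ring

lemma abs_rightNodeRule_le {a d s M : ℝ} {f : ℝ → ℝ} (hd : 0 < d) (has : a ≤ s)
    (hsd : s ≤ a + d) (hf : ∀ x ∈ ({a, a + d, a + 2 * d} : Set ℝ), |f x| ≤ M) :
    |rightNodeRule a d s f| ≤ 16 / 3 * d * M := by
  set θ := (a + d - s) / d
  have hθ₀ : 0 ≤ θ := div_nonneg (by linarith) hd.le
  have hθ₁ : θ ≤ 1 := (div_le_one hd).2 (by linarith)
  have hβ₁ : |-(1/12) + 1/12 * θ + 1/6 * θ^2| ≤ 1/3 := abs_le.2 ⟨by nlinarith, by nlinarith⟩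
  have hβ₂ : |2/3 + 1/3 * θ - 1/3 * θ^2| ≤ 4/3 := abs_le.2 ⟨by nlinarith, by nlinarith⟩
  have hβ₃ : |5/12 - 5/12 * θ + 1/6 * θ^2| ≤ 1 := abs_le.2 ⟨by nlinarith, by nlinarith⟩
  have hM : 0 ≤ M := (abs_nonneg _).trans (hf a (by simp))
  have hsum : |(-(1/12) + 1/12 * θ + 1/6 * θ^2) * f a + (2/3 + 1/3 * θ - 1/3 * θ^2) * f (a + d) +
      (5/12 - 5/12 * θ + 1/6 * θ^2) * f (a + 2 * d)| ≤ 8 / 3 * M := by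
    refine (abs_add_three _ _ _).trans ?_
    simp only [abs_mul]
    have := mul_le_mul hβ₁ (hf a (by simp)) (abs_nonneg _) (by norm_num)
    have := mul_le_mul hβ₂ (hf (a + d) (by simp)) (abs_nonneg _) (by norm_num)
    have := mul_le_mul hβ₃ (hf (a + 2 * d) (by simp)) (abs_nonneg _) (by norm_num)
    linarith
  calc |rightNodeRule a d s f| ≤ (2 * d) * (8 / 3 * M) := by
        rw [rightNodeRule, abs_mul, abs_of_nonneg (by linarith)]
        exact mul_le_mul (by linarith) hsum (abs_nonneg _) (by linarith)
    _ = 16 / 3 * d * M := by ring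

lemma abs_integral_sub_rightNodeRule_le {f : ℝ → ℝ} {a d s M c₀ c₁ c₂ : ℝ} (hd : 0 < d)
    (has : a ≤ s) (hsd : s ≤ a + d) (hf : IntervalIntegrable f volume s (a + 2 * d))
    (hM : ∀ x ∈ Icc a (a + 2 * d), |f x - (c₀ + c₁ * (x - a) + c₂ * (x - a) ^ 2)| ≤ M) :
    |(∫ u in s..a + 2 * d, f u) - rightNodeRule a d s f| ≤ 22 / 3 * d * M := by
  set p : ℝ → ℝ := fun u => c₀ + c₁ * (u - a) + c₂ * (u - a) ^ 2
  have hp : IntervalIntegrable p volume s (a + 2 * d) := by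
    apply Continuous.intervalIntegrable; fun_prop
  have hsplit : (∫ u in s..a + 2 * d, f u) - rightNodeRule a d s f =
      (∫ u in s..a + 2 * d, (f - p) u) - rightNodeRule a d s (f - p) := by
    rw [rightNodeRule_sub, Pi.sub_def, intervalIntegral.integral_sub hf hp,
      integral_quadratic_eq_rightNodeRule hd.ne']
    ring
  have hint : ‖∫ u in s..a + 2 * d, (f - p) u‖ ≤ M * |a + 2 * d - s| := by
    refine intervalIntegral.norm_integral_le_of_norm_le_const fun x hx => ?_
    rw [uIoc_of_le (by linarith)] at hx
    exact hM x ⟨has.trans hx.1.le, hx.2⟩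
  have hrule : |rightNodeRule a d s (f - p)| ≤ 16 / 3 * d * M :=
    abs_rightNodeRule_le hd has hsd fun x hx => hM x <| by
      rcases hx with rfl | rfl | rfl <;> constructor <;> linarith
  have hM₀ : 0 ≤ M := (abs_nonneg _).trans (hM a ⟨le_rfl, by linarith⟩)
  rw [Real.norm_eq_abs, abs_of_nonneg (by linarith : 0 ≤ a + 2 * d - s)] at hint
  rw [hsplit]
  calc _ ≤ |∫ u in s..a + 2 * d, (f - p) u| + |rightNodeRule a d s (f - p)| := abs_sub _ _
    _ ≤ M * (2 * d) + 16 / 3 * d * M := add_le_add (hint.trans (by gcongr; linarith)) hrule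
    _ = 22 / 3 * d * M := by ring

lemma abs_sub_quadratic_taylor_le {f : ℝ → ℝ} {a b C x : ℝ} (hab : a ≤ b)
    (hf : ContDiffOn ℝ 3 f (Icc a b))
    (hC : ∀ y ∈ Icc a b, |iteratedDerivWithin 3 f (Icc a b) y| ≤ C) (hx : x ∈ Icc a b) :
    |f x - (f a + derivWithin f (Icc a b) a * (x - a) +
      iteratedDerivWithin 2 f (Icc a b) a / 2 * (x - a) ^ 2)| ≤ C * (b - a) ^ 3 / 2 := by
  have hrem := taylor_mean_remainder_bound (n := 2) hab hf hx hC
  have htaylor : taylorWithinEval f 2 (Icc a b) a x = f a + derivWithin f (Icc a b) a * (x - a) +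
      iteratedDerivWithin 2 f (Icc a b) a / 2 * (x - a) ^ 2 := by
    simp only [taylor_within_apply, Finset.sum_range_succ, Finset.sum_range_zero, smul_eq_mul,
      iteratedDerivWithin_zero, iteratedDerivWithin_one, Nat.factorial]
    ring
  have hC₀ : 0 ≤ C := (abs_nonneg _).trans (hC a ⟨le_rfl, hab⟩)
  rw [← htaylor, ← Real.norm_eq_abs]
  refine hrem.trans ?_
  rw [Nat.factorial_two, Nat.cast_ofNat]
  gcongr
  · exact sub_nonneg.2 hx.1
  · exact hx.2

/-- Order-four error bound, uniform in `s` and `Δ`, for the three-node quadrature rule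
with target node `T_{ϱ(s)+1}` and weights
`β₁ = −1/12 + (1/12)θ + (1/6)θ²`, `β₂ = 2/3 + (1/3)θ − (1/3)θ²`,
`β₃ = 5/12 − (5/12)θ + (1/6)θ²`, where `θ = (T_{ϱ(s)} − s)/Δ`. -/
theorem quadrature_right_node_order_four (C : ℝ) (hC : 0 < C) :
    ∃ K > 0, ∀ (t0 Tstar : ℝ), t0 < Tstar → ∀ N : ℕ, 0 < N →
      ∀ s : ℝ, t0 ≤ s → s < Tstar →
      ∀ ℓ : ℕ, Tgrid t0 Tstar N ℓ ≤ s → s < Tgrid t0 Tstar N (ℓ + 1) → ℓ + 2 ≤ N →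
      ∀ g : ℝ → ℝ,
        ContDiffOn ℝ 3 g (Set.Icc (Tgrid t0 Tstar N ℓ) (Tgrid t0 Tstar N (ℓ + 2))) →
        (∀ j : ℕ, j ≤ 3 →
          ∀ u ∈ Set.Icc (Tgrid t0 Tstar N ℓ) (Tgrid t0 Tstar N (ℓ + 2)),
            |iteratedDerivWithin j g
                (Set.Icc (Tgrid t0 Tstar N ℓ) (Tgrid t0 Tstar N (ℓ + 2))) u| ≤ C) →
        let Δ : ℝ := (Tstar - t0) / N
        let θ : ℝ := (Tgrid t0 Tstar N (ℓ + 1) - s) / Δ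
        |(∫ u in s..(Tgrid t0 Tstar N (ℓ + 2)), g u) -
            (Tgrid t0 Tstar N (ℓ + 2) - s) *
              ((-(1/12) + 1/12 * θ + 1/6 * θ^2) * g (Tgrid t0 Tstar N ℓ) +
               (2/3 + 1/3 * θ - 1/3 * θ^2) * g (Tgrid t0 Tstar N (ℓ + 1)) +
               (5/12 - 5/12 * θ + 1/6 * θ^2) * g (Tgrid t0 Tstar N (ℓ + 2)))|
          ≤ K * Δ^4 := by
  refine ⟨30 * C, by positivity, fun t0 Tstar hts N hN s _ _ ℓ has hsm _ g hg hbd => ?_⟩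
  simp only [Tgrid_add, Nat.cast_one, one_mul, Nat.cast_ofNat] at hsm hg hbd ⊢
  set Δ := (Tstar - t0) / N
  set a := Tgrid t0 Tstar N ℓ
  have hΔ : 0 < Δ := div_pos (sub_pos.2 hts) (Nat.cast_pos.2 hN)
  have hab : a ≤ a + 2 * Δ := by linarith
  have hgi : IntervalIntegrable g volume s (a + 2 * Δ) :=
    (hg.continuousOn.mono (Icc_subset_Icc_left has)).intervalIntegrable_of_Icc (by linarith)
  have herr := abs_integral_sub_rightNodeRule_le hΔ has hsm.le hgi fun x hx =>
    abs_sub_quadratic_taylor_le hab hg (hbd 3 le_rfl) hx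
  calc _ = |(∫ u in s..a + 2 * Δ, g u) - rightNodeRule a Δ s g| := rfl
    _ ≤ 22 / 3 * Δ * (C * (a + 2 * Δ - a) ^ 3 / 2) := herr
    _ = 88 / 3 * C * Δ ^ 4 := by ring
    _ ≤ 30 * C * Δ ^ 4 := by gcongr; norm_num
end

section
/- Let C > 0, Δ ≥ h > 0, and let T_ℓ < T_ϱ = T_ℓ + Δ be two real numbers. Let [a, a + h] ⊆ [T_ℓ, T_ϱ] and let g₁, g₂ : [a, a + h] → ℝ be continuously differentiable with |g₁'| ≤ C and |g₂'| ≤ C. Set m = a + h/2. Then |∫_a^{a+h} ( ((s − T_ℓ)/Δ) g₂(s) + ((T_ϱ − s)/Δ) g₁(s) ) ds − h·( ((m − T_ℓ)/Δ) g₂(a) + ((T_ϱ − m)/Δ) g₁(a) )| ≤ C h², where the bound C h² is independent of Δ (in particular it does not degrade as Δ becomes much larger than h). -/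
/-!
Since the interpolation is affine in `s`, the midpoint rule integrates it exactly, so the
quadrature equals `∫_a^{a+h}` of the interpolation with `g₁, g₂` frozen at `a`. The error
integrand is then the interpolation of `g₁(s) - g₁(a)` and `g₂(s) - g₂(a)`; for
`s ∈ [T_ℓ, T_ϱ]` the weights are nonnegative and sum to `1`, so it is bounded by `C (s - a)` no matter
how large `Δ` is, and integrating gives `C h² / 2`.
-/

open Set intervalIntegral
open MeasureTheory (volume ae_of_all)

noncomputable def linInterp (Tl Δ y₁ y₂ s : ℝ) : ℝ :=
  (s - Tl) / Δ * y₂ + (Tl + Δ - s) / Δ * y₁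

lemma linInterp_sub_linInterp (Tl Δ x₁ x₂ y₁ y₂ s : ℝ) :
    linInterp Tl Δ x₁ x₂ s - linInterp Tl Δ y₁ y₂ s = linInterp Tl Δ (x₁ - y₁) (x₂ - y₂) s := by
  unfold linInterp
  ring

lemma intervalIntegrable_linInterp {Tl Δ a b : ℝ} {g₁ g₂ : ℝ → ℝ} (hab : a ≤ b)
    (hg₁ : ContinuousOn g₁ (Icc a b)) (hg₂ : ContinuousOn g₂ (Icc a b)) :
    IntervalIntegrable (fun s => linInterp Tl Δ (g₁ s) (g₂ s) s) volume a b := by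
  refine ContinuousOn.intervalIntegrable_of_Icc hab ?_
  unfold linInterp
  fun_prop

lemma abs_linInterp_le {Tl Δ y₁ y₂ s ε : ℝ} (hΔ : 0 < Δ) (hs : s ∈ Icc Tl (Tl + Δ))
    (h₁ : |y₁| ≤ ε) (h₂ : |y₂| ≤ ε) : |linInterp Tl Δ y₁ y₂ s| ≤ ε := by
  have hw₂ : 0 ≤ (s - Tl) / Δ := div_nonneg (by linarith [hs.1]) hΔ.le
  have hw₁ : 0 ≤ (Tl + Δ - s) / Δ := div_nonneg (by linarith [hs.2]) hΔ.le
  have hw : (s - Tl) / Δ + (Tl + Δ - s) / Δ = 1 := by field_simp; ring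
  calc |linInterp Tl Δ y₁ y₂ s|
      ≤ (s - Tl) / Δ * |y₂| + (Tl + Δ - s) / Δ * |y₁| := by
        unfold linInterp
        refine (abs_add_le _ _).trans_eq ?_
        rw [abs_mul, abs_mul, abs_of_nonneg hw₂, abs_of_nonneg hw₁]
    _ ≤ (s - Tl) / Δ * ε + (Tl + Δ - s) / Δ * ε := by gcongr
    _ = ε := by rw [← add_mul, hw, one_mul]

lemma integral_linInterp (Tl Δ y₁ y₂ a b : ℝ) :
    ∫ s in a..b, linInterp Tl Δ y₁ y₂ s = (b - a) * linInterp Tl Δ y₁ y₂ ((a + b) / 2) := by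
  have haff : ∀ s, linInterp Tl Δ y₁ y₂ s = (y₂ - y₁) / Δ * s + ((Tl + Δ) * y₁ - Tl * y₂) / Δ := by
    intro s
    unfold linInterp
    ring
  simp only [haff]
  rw [integral_add (intervalIntegrable_id.const_mul _) intervalIntegrable_const,
    intervalIntegral.integral_const_mul, integral_id, integral_const, smul_eq_mul]
  ring

lemma abs_sub_le_mul_of_abs_derivWithin_le {g : ℝ → ℝ} {a b C : ℝ}
    (hg : DifferentiableOn ℝ g (Icc a b)) (hbound : ∀ u ∈ Icc a b, |derivWithin g (Icc a b) u| ≤ C)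
    {s : ℝ} (hs : s ∈ Icc a b) : |g s - g a| ≤ C * (s - a) := by
  have ha : a ∈ Icc a b := left_mem_Icc.2 (hs.1.trans hs.2)
  have := (convex_Icc a b).norm_image_sub_le_of_norm_derivWithin_le hg hbound ha hs
  rwa [Real.norm_eq_abs, Real.norm_eq_abs, abs_of_nonneg (sub_nonneg.2 hs.1)] at this

lemma abs_integral_le_of_abs_le_mul_sub {f : ℝ → ℝ} {a b C : ℝ} (hab : a ≤ b)
    (hf : ∀ s ∈ Icc a b, |f s| ≤ C * (s - a)) :
    |∫ s in a..b, f s| ≤ C * (b - a) ^ 2 / 2 := by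
  have hint : IntervalIntegrable (fun s => C * (s - a)) volume a b := by
    apply Continuous.intervalIntegrable
    fun_prop
  calc |∫ s in a..b, f s|
      ≤ ∫ s in a..b, C * (s - a) := by
        simpa only [Real.norm_eq_abs] using norm_integral_le_of_norm_le hab
          (ae_of_all _ fun s hs => (Real.norm_eq_abs (f s)).trans_le (hf s (Ioc_subset_Icc_self hs)))
          hint
    _ = C * (b - a) ^ 2 / 2 := by
      rw [intervalIntegral.integral_const_mul,
        integral_sub intervalIntegrable_id intervalIntegrable_const, integral_id, integral_const, smul_eq_mul]
      ring

theorem interpolated_short_rate_one_step_quadrature_general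
    (C Δ h Tl a : ℝ) (hh : 0 < h)
    (hal : Tl ≤ a) (har : a + h ≤ Tl + Δ)
    (g₁ g₂ : ℝ → ℝ)
    (hg₁ : ContDiffOn ℝ 1 g₁ (Set.Icc a (a + h)))
    (hg₂ : ContDiffOn ℝ 1 g₂ (Set.Icc a (a + h)))
    (hb₁ : ∀ u ∈ Set.Icc a (a + h),
      |iteratedDerivWithin 1 g₁ (Set.Icc a (a + h)) u| ≤ C)
    (hb₂ : ∀ u ∈ Set.Icc a (a + h),
      |iteratedDerivWithin 1 g₂ (Set.Icc a (a + h)) u| ≤ C) :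
    |(∫ s in a..(a + h), (((s - Tl) / Δ) * g₂ s + ((Tl + Δ - s) / Δ) * g₁ s)) -
        h * (((a + h / 2 - Tl) / Δ) * g₂ a + ((Tl + Δ - (a + h / 2)) / Δ) * g₁ a)|
      ≤ C * h^2 := by
  have hΔ : 0 < Δ := by linarith
  have hab : a ≤ a + h := by linarith
  have hC : 0 ≤ C := (abs_nonneg _).trans (hb₁ a (left_mem_Icc.2 hab))
  rw [iteratedDerivWithin_one] at hb₁ hb₂
  have hquad : h * linInterp Tl Δ (g₁ a) (g₂ a) (a + h / 2)
      = ∫ s in a..(a + h), linInterp Tl Δ (g₁ a) (g₂ a) s := by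
    rw [integral_linInterp, add_sub_cancel_left]
    ring_nf
  change |(∫ s in a..(a + h), linInterp Tl Δ (g₁ s) (g₂ s) s)
    - h * linInterp Tl Δ (g₁ a) (g₂ a) (a + h / 2)| ≤ C * h ^ 2
  rw [hquad, ← integral_sub (intervalIntegrable_linInterp hab hg₁.continuousOn hg₂.continuousOn)
    (intervalIntegrable_linInterp hab continuousOn_const continuousOn_const)]
  have herror : ∀ s ∈ Icc a (a + h),
      |linInterp Tl Δ (g₁ s) (g₂ s) s - linInterp Tl Δ (g₁ a) (g₂ a) s| ≤ C * (s - a) := by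
    intro s hs
    rw [linInterp_sub_linInterp]
    exact abs_linInterp_le hΔ (Icc_subset_Icc hal har hs)
      (abs_sub_le_mul_of_abs_derivWithin_le (hg₁.differentiableOn one_ne_zero) hb₁ hs)
      (abs_sub_le_mul_of_abs_derivWithin_le (hg₂.differentiableOn one_ne_zero) hb₂ hs)
  refine (abs_integral_le_of_abs_le_mul_sub hab herror).trans ?_
  rw [add_sub_cancel_left]
  linarith [mul_nonneg hC (sq_nonneg h)]

/-- One-step time-quadrature for the linearly interpolated short rate: freezing `g₁, g₂`
at the left endpoint while integrating the interpolation weights exactly gives a local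
error of order `h²` uniformly in `Δ` (here `T_ϱ = T_ℓ + Δ` and `m = a + h/2`). -/
theorem interpolated_short_rate_one_step_quadrature
    (C Δ h Tl a : ℝ) (hC : 0 < C) (hh : 0 < h) (hhΔ : h ≤ Δ)
    (hal : Tl ≤ a) (har : a + h ≤ Tl + Δ)
    (g₁ g₂ : ℝ → ℝ)
    (hg₁ : ContDiffOn ℝ 1 g₁ (Set.Icc a (a + h)))
    (hg₂ : ContDiffOn ℝ 1 g₂ (Set.Icc a (a + h)))
    (hb₁ : ∀ u ∈ Set.Icc a (a + h),
      |iteratedDerivWithin 1 g₁ (Set.Icc a (a + h)) u| ≤ C)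
    (hb₂ : ∀ u ∈ Set.Icc a (a + h),
      |iteratedDerivWithin 1 g₂ (Set.Icc a (a + h)) u| ≤ C) :
    |(∫ s in a..(a + h), (((s - Tl) / Δ) * g₂ s + ((Tl + Δ - s) / Δ) * g₁ s)) -
        h * (((a + h / 2 - Tl) / Δ) * g₂ a + ((Tl + Δ - (a + h / 2)) / Δ) * g₁ a)|
      ≤ C * h^2 :=
  interpolated_short_rate_one_step_quadrature_general C Δ h Tl a hh hal har g₁ g₂ hg₁ hg₂ hb₁ hb₂
end

section
/- Under the stated assumptions, suppose in addition that the quadrature has order p along the exact solution: there exist p > 0 and C₁ > 0 such that for all s ∈ [t0, t*], all i = 0,…,N and all j = 1,…,d, |Δ·Σ_{k=ℓ(s)}^{κ(s,T_i)} γ_k(s) σ_j(s, T_k, f(s, T_k)) − ∫_s^{T_i} σ_j(s, u, f(s, u)) du| ≤ C₁ Δ^p. Then there exists a constant K > 0 depending only on C, L, Γ, C₁, d, t* − t0 and T* − t0 (and not on Δ or N) such that |f̃^i(t) − f(t, T_i)| ≤ K Δ^p for all t ∈ [t0, t*] and all i = 0,…,N. -/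
/-- `ℓ(s)`: the largest grid index `i` with `T_i ≤ s`. -/
noncomputable def ellIdx (t0 Tstar : ℝ) (N : ℕ) (s : ℝ) : ℕ :=
  Nat.floor ((s - t0) / ((Tstar - t0) / N))

open MeasureTheory Set Real

theorem abs_sum_le_card_mul {ι : Type*} (s : Finset ι) {a : ι → ℝ} {M : ℝ}
    (h : ∀ i ∈ s, |a i| ≤ M) : |∑ i ∈ s, a i| ≤ s.card * M :=
  (Finset.abs_sum_le_sum_abs a s).trans <| by
    simpa only [nsmul_eq_mul] using Finset.sum_le_card_nsmul s _ M h

theorem abs_sum_fin_le {d : ℕ} {a : Fin d → ℝ} {M : ℝ} (h : ∀ j, |a j| ≤ M) :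
    |∑ j, a j| ≤ d * M := by
  simpa using abs_sum_le_card_mul Finset.univ fun j _ => h j

theorem abs_integral_sub_integral_le {g h b : ℝ → ℝ} {a t : ℝ} (hat : a ≤ t)
    (hg : IntervalIntegrable g volume a t) (hh : IntervalIntegrable h volume a t)
    (hb : IntervalIntegrable b volume a t) (hgh : ∀ s ∈ Icc a t, |g s - h s| ≤ b s) :
    |(∫ s in a..t, g s) - ∫ s in a..t, h s| ≤ ∫ s in a..t, b s := by
  rw [← intervalIntegral.integral_sub hg hh]
  exact (intervalIntegral.abs_integral_le_integral_abs hat).trans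
    (intervalIntegral.integral_mono_on hat (hg.sub hh).abs hb hgh)

theorem intervalIntegrable_of_abs_le {g : ℝ → ℝ} {a b M t : ℝ}
    (hg : AEStronglyMeasurable g (volume.restrict (Icc a b))) (hM : ∀ s ∈ Icc a b, |g s| ≤ M)
    (ht : t ∈ Icc a b) : IntervalIntegrable g volume a t := by
  have hsub : uIoc a t ⊆ Icc a b := by
    rw [uIoc_of_le ht.1]; exact Ioc_subset_Icc_self.trans (Icc_subset_Icc le_rfl ht.2)
  refine IntervalIntegrable.mono_fun' (g := fun _ => M) intervalIntegrable_const
    (hg.mono_measure (Measure.restrict_mono hsub le_rfl)) ?_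
  exact ae_restrict_of_forall_mem measurableSet_uIoc fun s hs => hM s (hsub hs)

theorem aemeasurable_sum_Icc {α β : Type*} [MeasurableSpace α] [AddCommMonoid β]
    [MeasurableSpace β] [MeasurableAdd₂ β] {μ : Measure α} {a b : α → ℕ}
    (ha : Measurable a) (hb : Measurable b) {M : ℕ} (hbM : ∀ᵐ x ∂μ, b x ≤ M)
    {φ : ℕ → α → β} (hφ : ∀ k ≤ M, AEMeasurable (φ k) μ) :
    AEMeasurable (fun x => ∑ k ∈ Finset.Icc (a x) (b x), φ k x) μ := by
  have hset : ∀ k : ℕ, MeasurableSet {x | a x ≤ k ∧ k ≤ b x} := fun k =>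
    (measurableSet_le ha measurable_const).inter (measurableSet_le measurable_const hb)
  refine (Finset.aemeasurable_fun_sum (Finset.range (M + 1)) fun k hk =>
    (hφ k (Nat.lt_succ_iff.1 (Finset.mem_range.1 hk))).indicator (hset k)).congr ?_
  filter_upwards [hbM] with x hx
  classical
  simp only [indicator_apply, mem_ofPred_eq, ← Finset.sum_filter]
  congr 1
  ext k
  simp only [Finset.mem_filter, Finset.mem_range, Finset.mem_Icc]
  omega

theorem aestronglyMeasurable_intervalIntegral_left {E : Type*} [NormedAddCommGroup E]
    [NormedSpace ℝ E] {F : ℝ × ℝ → E} (hF : AEStronglyMeasurable F volume) (T : ℝ) :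
    AEStronglyMeasurable (fun s => ∫ u in s..T, F (s, u)) volume := by
  rw [Measure.volume_eq_prod] at hF
  have hslice : ∀ (P : ℝ → ℝ → Prop) (s : ℝ),
      (fun u => {q : ℝ × ℝ | P q.1 q.2}.indicator F (s, u)) =
        {u | P s u}.indicator (fun u => F (s, u)) := fun _ _ => rfl
  have hrepr : (fun s => ∫ u in s..T, F (s, u)) = fun s =>
      (∫ u, {q : ℝ × ℝ | q.1 < q.2 ∧ q.2 ≤ T}.indicator F (s, u)) -
        ∫ u, {q : ℝ × ℝ | T < q.2 ∧ q.2 ≤ q.1}.indicator F (s, u) := by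
    ext s
    rw [hslice (fun s u => s < u ∧ u ≤ T), hslice (fun s u => T < u ∧ u ≤ s)]
    exact (congrArg₂ _ (integral_indicator measurableSet_Ioc)
      (integral_indicator measurableSet_Ioc)).symm
  rw [hrepr]
  exact ((hF.indicator ((measurableSet_lt measurable_fst measurable_snd).inter
    (measurableSet_le measurable_snd measurable_const))).integral_prod_right').sub
    ((hF.indicator ((measurableSet_lt measurable_const measurable_snd).inter
    (measurableSet_le measurable_snd measurable_fst))).integral_prod_right')

theorem le_mul_exp_of_le_mul_integral_add {E : ℝ → ℝ} {a b A ε : ℝ}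
    (hE : ContinuousOn E (Icc a b)) (hE0 : ∀ t ∈ Icc a b, 0 ≤ E t) (hA : 0 ≤ A)
    (h : ∀ t ∈ Icc a b, E t ≤ A * (∫ s in a..t, E s) + ε) :
    ∀ t ∈ Icc a b, E t ≤ ε * exp (A * (t - a)) := by
  intro t ht
  set G : ℝ → ℝ := fun t => ∫ s in a..t, E s
  have hab : a ≤ b := ht.1.trans ht.2
  have hEint : IntegrableOn E (uIcc a b) := by
    rw [uIcc_of_le hab]; exact hE.integrableOn_Icc
  have hG0 : ∀ x ∈ Icc a b, 0 ≤ G x := fun x hx =>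
    intervalIntegral.integral_nonneg hx.1 fun u hu => hE0 u ⟨hu.1, hu.2.trans hx.2⟩
  have hGcont : ContinuousOn G (Icc a b) := by
    simpa only [uIcc_of_le hab] using intervalIntegral.continuousOn_primitive_interval hEint
  have hGderiv : ∀ x ∈ Ico a b, HasDerivWithinAt G (E x) (Ici x) x := by
    intro x hx
    have hmem : Icc a b ∈ nhdsWithin x (Ioi x) :=
      nhdsWithin_mono x Ioi_subset_Ici_self (Icc_mem_nhdsGE_of_mem hx)
    exact intervalIntegral.integral_hasDerivWithinAt_right
      (hE.mono (by rw [uIcc_of_le hx.1]; exact Icc_subset_Icc le_rfl hx.2.le)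
        |>.intervalIntegrable)
      ⟨Icc a b, hmem, hE.aestronglyMeasurable measurableSet_Icc⟩
      ((hE x (Ico_subset_Icc_self hx)).mono_of_mem_nhdsWithin hmem)
  -- Grönwall for the primitive `G`, whose derivative `E` is at most `A * G + ε`
  have hGbound := norm_le_gronwallBound_of_norm_deriv_right_le hGcont hGderiv
    (show ‖G a‖ ≤ 0 by simp [G]) (fun x hx => by
      rw [norm_of_nonneg (hE0 x (Ico_subset_Icc_self hx)),
        norm_of_nonneg (hG0 x (Ico_subset_Icc_self hx))]
      exact h x (Ico_subset_Icc_self hx)) t ht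
  rw [norm_of_nonneg (hG0 t ht)] at hGbound
  have hexp : A * gronwallBound 0 A ε (t - a) + ε = ε * exp (A * (t - a)) := by
    rcases eq_or_ne A 0 with rfl | hA0
    · simp
    · rw [gronwallBound_of_K_ne_0 hA0]; field_simp; ring
  calc E t ≤ A * G t + ε := h t ht
    _ ≤ A * gronwallBound 0 A ε (t - a) + ε := by gcongr
    _ = ε * exp (A * (t - a)) := hexp

theorem Tgrid_mem_Icc {t0 Tstar : ℝ} (h : t0 ≤ Tstar) {N k : ℕ} (hk : k ≤ N) :
    Tgrid t0 Tstar N k ∈ Icc t0 Tstar := by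
  have hkN : (k : ℝ) / N ≤ 1 := div_le_one_of_le₀ (by exact_mod_cast hk) (Nat.cast_nonneg N)
  have hT : Tgrid t0 Tstar N k = t0 + (k / N) * (Tstar - t0) := by
    unfold Tgrid; ring
  rw [hT]
  constructor <;> nlinarith [div_nonneg (Nat.cast_nonneg k) (Nat.cast_nonneg N : (0 : ℝ) ≤ N)]

theorem measurable_ellIdx (t0 Tstar : ℝ) (N : ℕ) : Measurable (ellIdx t0 Tstar N) :=
  ((measurable_id.sub_const t0).div_const _).nat_floor

theorem abs_step_mul_sum_Icc_le {t0 Tstar : ℝ} (h : t0 ≤ Tstar) {N a b : ℕ} (hN : 0 < N)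
    (hb : b ≤ N) {F : ℕ → ℝ} {M : ℝ} (hM : 0 ≤ M) (hF : ∀ k ∈ Finset.Icc a b, |F k| ≤ M) :
    |(Tstar - t0) / N * ∑ k ∈ Finset.Icc a b, F k| ≤ 2 * (Tstar - t0) * M := by
  have hN' : (0 : ℝ) < N := by exact_mod_cast hN
  have hcard : ((Finset.Icc a b).card : ℝ) ≤ 2 * N := by
    rw [Nat.card_Icc]; norm_cast; omega
  rw [abs_mul, abs_of_nonneg (div_nonneg (sub_nonneg.2 h) hN'.le)]
  calc (Tstar - t0) / N * |∑ k ∈ Finset.Icc a b, F k|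
      ≤ (Tstar - t0) / N * (2 * N * M) := by
        gcongr
        exact (abs_sum_le_card_mul _ hF).trans (by gcongr)
    _ = 2 * (Tstar - t0) * M := by field_simp

/-- The paper's `S̃_I(s, T_i)`, with `x k` in place of `f̃ᵏ(s)`. -/
noncomputable def quadrature {d : ℕ} (t0 Tstar : ℝ) (N : ℕ) (σ : Fin d → ℝ → ℝ → ℝ → ℝ)
    (γ : ℕ → ℝ → ℝ) (κ : ℝ → ℕ → ℕ) (j : Fin d) (i : ℕ) (s : ℝ) (x : ℕ → ℝ) : ℝ :=
  (Tstar - t0) / N * ∑ k ∈ Finset.Icc (ellIdx t0 Tstar N s) (κ s i),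
    γ k s * σ j s (Tgrid t0 Tstar N k) (x k)

noncomputable def discreteDrift {d : ℕ} (t0 Tstar : ℝ) (N : ℕ) (σ : Fin d → ℝ → ℝ → ℝ → ℝ)
    (γ : ℕ → ℝ → ℝ) (κ : ℝ → ℕ → ℕ) (i : ℕ) (s : ℝ) (x : ℕ → ℝ) : ℝ :=
  ∑ j, σ j s (Tgrid t0 Tstar N i) (x i) * quadrature t0 Tstar N σ γ κ j i s x

noncomputable def hjmDrift {d : ℕ} (σ : Fin d → ℝ → ℝ → ℝ → ℝ) (s T : ℝ) (F : ℝ → ℝ) : ℝ :=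
  ∑ j, σ j s T (F T) * ∫ u in s..T, σ j s u (F u)

section Drift

variable {d N i : ℕ} {t0 Tstar C L Γ s : ℝ} {σ : Fin d → ℝ → ℝ → ℝ → ℝ} {γ : ℕ → ℝ → ℝ}
  {κ : ℝ → ℕ → ℕ}

theorem abs_quadrature_le (hT : t0 ≤ Tstar) (hN : 0 < N) (hC : 0 ≤ C) (hΓ : 0 ≤ Γ)
    (hσ : ∀ j t T z, |σ j t T z| ≤ C) (hγ : ∀ k, |γ k s| ≤ Γ) (hκ : κ s i ≤ N) (j : Fin d)
    (x : ℕ → ℝ) : |quadrature t0 Tstar N σ γ κ j i s x| ≤ 2 * (Tstar - t0) * (Γ * C) :=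
  abs_step_mul_sum_Icc_le hT hN hκ (mul_nonneg hΓ hC) fun k _ => by
    rw [abs_mul]; exact mul_le_mul (hγ k) (hσ ..) (abs_nonneg _) hΓ

theorem abs_quadrature_sub_le (hT : t0 ≤ Tstar) (hN : 0 < N) (hL : 0 ≤ L) (hΓ : 0 ≤ Γ)
    (hσ : ∀ j t T z z', |σ j t T z - σ j t T z'| ≤ L * |z - z'|) (hγ : ∀ k, |γ k s| ≤ Γ)
    (hκ : κ s i ≤ N) (j : Fin d) {x y : ℕ → ℝ} {e : ℝ} (hxy : ∀ k ≤ N, |x k - y k| ≤ e) :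
    |quadrature t0 Tstar N σ γ κ j i s x - quadrature t0 Tstar N σ γ κ j i s y| ≤
      2 * (Tstar - t0) * (Γ * (L * e)) := by
  have he : 0 ≤ e := (abs_nonneg _).trans (hxy 0 N.zero_le)
  simp only [quadrature, ← mul_sub, ← Finset.sum_sub_distrib]
  refine abs_step_mul_sum_Icc_le hT hN hκ (by positivity) fun k hk => ?_
  rw [abs_mul]
  exact mul_le_mul (hγ k) ((hσ ..).trans (mul_le_mul_of_nonneg_left
    (hxy k ((Finset.mem_Icc.1 hk).2.trans hκ)) hL)) (abs_nonneg _) hΓ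

theorem abs_discreteDrift_le (hT : t0 ≤ Tstar) (hN : 0 < N) (hC : 0 ≤ C) (hΓ : 0 ≤ Γ)
    (hσ : ∀ j t T z, |σ j t T z| ≤ C) (hγ : ∀ k, |γ k s| ≤ Γ) (hκ : κ s i ≤ N) (x : ℕ → ℝ) :
    |discreteDrift t0 Tstar N σ γ κ i s x| ≤ d * (C * (2 * (Tstar - t0) * (Γ * C))) := by
  unfold discreteDrift
  refine abs_sum_fin_le fun j => ?_
  rw [abs_mul]
  exact mul_le_mul (hσ ..) (abs_quadrature_le hT hN hC hΓ hσ hγ hκ j x) (abs_nonneg _) hC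

theorem abs_discreteDrift_sub_le (hT : t0 ≤ Tstar) (hN : 0 < N) (hC : 0 ≤ C) (hL : 0 ≤ L)
    (hΓ : 0 ≤ Γ) (hσ : ∀ j t T z, |σ j t T z| ≤ C)
    (hσL : ∀ j t T z z', |σ j t T z - σ j t T z'| ≤ L * |z - z'|) (hγ : ∀ k, |γ k s| ≤ Γ)
    (hκ : κ s i ≤ N) (hi : i ≤ N) {x y : ℕ → ℝ} {e : ℝ} (hxy : ∀ k ≤ N, |x k - y k| ≤ e) :
    |discreteDrift t0 Tstar N σ γ κ i s x - discreteDrift t0 Tstar N σ γ κ i s y| ≤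
      d * (4 * (Tstar - t0) * Γ * L * C * e) := by
  unfold discreteDrift
  rw [← Finset.sum_sub_distrib]
  refine abs_sum_fin_le fun j => ?_
  set T := Tgrid t0 Tstar N i
  set Q := quadrature t0 Tstar N σ γ κ j i s
  calc |σ j s T (x i) * Q x - σ j s T (y i) * Q y|
      = |(σ j s T (x i) - σ j s T (y i)) * Q x + σ j s T (y i) * (Q x - Q y)| := by ring_nf
    _ ≤ L * e * (2 * (Tstar - t0) * (Γ * C)) + C * (2 * (Tstar - t0) * (Γ * (L * e))) := by
      refine (abs_add_le _ _).trans (add_le_add ?_ ?_) <;> rw [abs_mul]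
      · exact mul_le_mul ((hσL ..).trans (mul_le_mul_of_nonneg_left (hxy i hi) hL))
          (abs_quadrature_le hT hN hC hΓ hσ hγ hκ j x) (abs_nonneg _)
          (mul_nonneg hL ((abs_nonneg _).trans (hxy i hi)))
      · exact mul_le_mul (hσ ..) (abs_quadrature_sub_le hT hN hL hΓ hσL hγ hκ j hxy)
          (abs_nonneg _) hC
    _ = 4 * (Tstar - t0) * Γ * L * C * e := by ring

theorem abs_discreteDrift_sub_hjmDrift_le (hC : 0 ≤ C) (hσ : ∀ j t T z, |σ j t T z| ≤ C)
    {F : ℝ → ℝ} {ε : ℝ}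
    (hquad : ∀ j, |quadrature t0 Tstar N σ γ κ j i s (fun k => F (Tgrid t0 Tstar N k)) -
      ∫ u in s..Tgrid t0 Tstar N i, σ j s u (F u)| ≤ ε) :
    |discreteDrift t0 Tstar N σ γ κ i s (fun k => F (Tgrid t0 Tstar N k)) -
      hjmDrift σ s (Tgrid t0 Tstar N i) F| ≤ d * (C * ε) := by
  unfold discreteDrift hjmDrift
  simp only [← Finset.sum_sub_distrib, ← mul_sub]
  refine abs_sum_fin_le fun j => ?_
  rw [abs_mul]; exact mul_le_mul (hσ ..) (hquad j) (abs_nonneg _) hC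

theorem abs_hjmDrift_le (hC : 0 ≤ C) (hσ : ∀ j t T z, |σ j t T z| ≤ C) {T : ℝ}
    (hs : s ∈ Icc t0 Tstar) (hT : T ∈ Icc t0 Tstar) (F : ℝ → ℝ) :
    |hjmDrift σ s T F| ≤ d * (C * (C * (Tstar - t0))) := by
  unfold hjmDrift
  refine abs_sum_fin_le fun j => ?_
  rw [abs_mul]
  refine mul_le_mul (hσ ..) ?_ (abs_nonneg _) hC
  refine (intervalIntegral.norm_integral_le_of_norm_le_const
    (f := fun u => σ j s u (F u)) fun u _ => hσ j s u (F u)).trans ?_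
  exact mul_le_mul_of_nonneg_left (abs_sub_le_iff.2 ⟨by linarith [hT.2, hs.1],
    by linarith [hT.1, hs.2]⟩) hC

end Drift

theorem aemeasurable_of_measurable_uncurry₃ {φ : ℝ → ℝ → ℝ → ℝ}
    (hφ : Measurable fun q : ℝ × ℝ × ℝ => φ q.1 q.2.1 q.2.2) {μ : Measure ℝ} {g : ℝ → ℝ}
    (hg : AEMeasurable g μ) (T : ℝ) : AEMeasurable (fun s => φ s T (g s)) μ :=
  hφ.comp_aemeasurable (aemeasurable_id.prodMk (aemeasurable_const.prodMk hg))

section Measurability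

variable {d N i : ℕ} {t0 tstar Tstar : ℝ} {σ : Fin d → ℝ → ℝ → ℝ → ℝ} {γ : ℕ → ℝ → ℝ}
  {κ : ℝ → ℕ → ℕ}

theorem aemeasurable_discreteDrift
    (hσm : ∀ j, Measurable fun q : ℝ × ℝ × ℝ => σ j q.1 q.2.1 q.2.2)
    (hγm : ∀ k, Measurable (γ k)) (hκm : Measurable fun s => κ s i)
    (hκ : ∀ s ∈ Icc t0 tstar, κ s i ≤ N) (hi : i ≤ N) {ftil : ℕ → ℝ → ℝ}
    (hftil : ∀ k ≤ N, ContinuousOn (ftil k) (Icc t0 tstar)) :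
    AEMeasurable (fun s => discreteDrift t0 Tstar N σ γ κ i s fun k => ftil k s)
      (volume.restrict (Icc t0 tstar)) := by
  have hx : ∀ k ≤ N, AEMeasurable (ftil k) (volume.restrict (Icc t0 tstar)) :=
    fun k hk => (hftil k hk).aemeasurable measurableSet_Icc
  unfold discreteDrift quadrature
  refine Finset.aemeasurable_fun_sum _ fun j _ =>
    (aemeasurable_of_measurable_uncurry₃ (hσm j) (hx i hi) _).mul
      (AEMeasurable.const_mul ?_ _)
  exact aemeasurable_sum_Icc (measurable_ellIdx t0 Tstar N) hκm
    (ae_restrict_of_forall_mem measurableSet_Icc hκ) fun k hk =>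
      (hγm k).aemeasurable.mul (aemeasurable_of_measurable_uncurry₃ (hσm j) (hx k hk) _)

theorem aestronglyMeasurable_hjmDrift
    (hσm : ∀ j, Measurable fun q : ℝ × ℝ × ℝ => σ j q.1 q.2.1 q.2.2) (htT : tstar ≤ Tstar)
    {f : ℝ → ℝ → ℝ}
    (hf : ContinuousOn (fun q : ℝ × ℝ => f q.1 q.2) (Icc t0 tstar ×ˢ Icc t0 Tstar))
    {T : ℝ} (hT : T ∈ Icc t0 Tstar) :
    AEStronglyMeasurable (fun s => hjmDrift σ s T (f s)) (volume.restrict (Icc t0 tstar)) := by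
  have hR : MeasurableSet (Icc t0 tstar ×ˢ Icc t0 Tstar) :=
    measurableSet_Icc.prod measurableSet_Icc
  -- `f` is only known on the rectangle, so integrate its cut-off
  have hF : ∀ j, AEStronglyMeasurable ((Icc t0 tstar ×ˢ Icc t0 Tstar).indicator
      fun q : ℝ × ℝ => σ j q.1 q.2 (f q.1 q.2)) volume := fun j =>
    (aestronglyMeasurable_indicator_iff hR).2 ((hσm j).comp_aemeasurable
      (measurable_fst.aemeasurable.prodMk (measurable_snd.aemeasurable.prodMk
        (hf.aemeasurable hR)))).aestronglyMeasurable
  have hI : ∀ j, AEStronglyMeasurable (fun s => ∫ u in s..T, σ j s u (f s u))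
      (volume.restrict (Icc t0 tstar)) := fun j =>
    (aestronglyMeasurable_intervalIntegral_left (hF j) T).restrict.congr <|
      ae_restrict_of_forall_mem measurableSet_Icc fun s hs =>
        intervalIntegral.integral_congr fun u hu =>
          indicator_of_mem (mk_mem_prod hs (uIcc_subset_Icc ⟨hs.1, hs.2.trans htT⟩ hT hu)) _
  unfold hjmDrift
  exact Finset.aestronglyMeasurable_fun_sum _ fun j _ =>
    (aemeasurable_of_measurable_uncurry₃ (hσm j)
      ((hf.uncurry_right T hT).aemeasurable measurableSet_Icc) T).aestronglyMeasurable.mul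
      (hI j)

end Measurability

noncomputable def maxError (t0 Tstar : ℝ) (N : ℕ) (f : ℝ → ℝ → ℝ) (ftil : ℕ → ℝ → ℝ)
    (s : ℝ) : ℝ :=
  (Finset.range (N + 1)).sup' Finset.nonempty_range_add_one
    fun k => |ftil k s - f s (Tgrid t0 Tstar N k)|

section MaxError

variable {d N k : ℕ} {t0 tstar Tstar : ℝ} {f : ℝ → ℝ → ℝ} {ftil : ℕ → ℝ → ℝ}

theorem abs_sub_le_maxError (hk : k ≤ N) (s : ℝ) :
    |ftil k s - f s (Tgrid t0 Tstar N k)| ≤ maxError t0 Tstar N f ftil s :=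
  Finset.le_sup' (fun k => |ftil k s - f s (Tgrid t0 Tstar N k)|)
    (Finset.mem_range_succ_iff.2 hk)

theorem maxError_nonneg (s : ℝ) : 0 ≤ maxError t0 Tstar N f ftil s :=
  (abs_nonneg _).trans (abs_sub_le_maxError N.zero_le s)

theorem continuousOn_maxError (hT : t0 ≤ Tstar)
    (hftil : ∀ k ≤ N, ContinuousOn (ftil k) (Icc t0 tstar))
    (hf : ContinuousOn (fun q : ℝ × ℝ => f q.1 q.2) (Icc t0 tstar ×ˢ Icc t0 Tstar)) :
    ContinuousOn (maxError t0 Tstar N f ftil) (Icc t0 tstar) :=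
  ContinuousOn.finset_sup'_apply _ fun k hk =>
    have hk : k ≤ N := Finset.mem_range_succ_iff.1 hk
    ((hftil k hk).sub (hf.uncurry_right _ (Tgrid_mem_Icc hT hk))).abs

end MaxError

theorem maxError_le_mul_integral_add {d N : ℕ} {t0 tstar Tstar C L Γ ε : ℝ} (hN : 0 < N)
    (htT : tstar ≤ Tstar) (hC : 0 ≤ C) (hL : 0 ≤ L) (hΓ : 0 ≤ Γ) (hε : 0 ≤ ε)
    {σ : Fin d → ℝ → ℝ → ℝ → ℝ}
    (hσm : ∀ j, Measurable fun q : ℝ × ℝ × ℝ => σ j q.1 q.2.1 q.2.2)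
    (hσ : ∀ j t T z, |σ j t T z| ≤ C)
    (hσL : ∀ j t T z z', |σ j t T z - σ j t T z'| ≤ L * |z - z'|) {f0 : ℝ → ℝ}
    {f : ℝ → ℝ → ℝ}
    (hfc : ContinuousOn (fun q : ℝ × ℝ => f q.1 q.2) (Icc t0 tstar ×ˢ Icc t0 Tstar))
    (hf : ∀ t ∈ Icc t0 tstar, ∀ T ∈ Icc t0 Tstar,
      f t T = f0 T + ∫ s in t0..t, hjmDrift σ s T (f s))
    {γ : ℕ → ℝ → ℝ} (hγm : ∀ k, Measurable (γ k)) (hγ : ∀ k s, |γ k s| ≤ Γ)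
    {κ : ℝ → ℕ → ℕ} (hκm : ∀ i, Measurable fun s => κ s i)
    (hκ : ∀ s ∈ Icc t0 tstar, ∀ i ≤ N, κ s i ≤ N)
    {ftil : ℕ → ℝ → ℝ} (hftilc : ∀ i ≤ N, ContinuousOn (ftil i) (Icc t0 tstar))
    (hftil : ∀ i ≤ N, ∀ t ∈ Icc t0 tstar, ftil i t = f0 (Tgrid t0 Tstar N i) +
      ∫ s in t0..t, discreteDrift t0 Tstar N σ γ κ i s fun k => ftil k s)
    (hquad : ∀ s ∈ Icc t0 tstar, ∀ i ≤ N, ∀ j,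
      |quadrature t0 Tstar N σ γ κ j i s (fun k => f s (Tgrid t0 Tstar N k)) -
        ∫ u in s..Tgrid t0 Tstar N i, σ j s u (f s u)| ≤ ε) :
    ∀ t ∈ Icc t0 tstar, maxError t0 Tstar N f ftil t ≤
      d * (4 * (Tstar - t0) * Γ * L * C) * (∫ s in t0..t, maxError t0 Tstar N f ftil s) +
        d * (C * ε) * (tstar - t0) := by
  intro t ht
  have hT : t0 ≤ Tstar := ht.1.trans (ht.2.trans htT)
  set E := maxError t0 Tstar N f ftil
  set A : ℝ := d * (4 * (Tstar - t0) * Γ * L * C)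
  have hsub : ∀ s ∈ Icc t0 t, s ∈ Icc t0 tstar := fun s hs => ⟨hs.1, hs.2.trans ht.2⟩
  have hEint : IntervalIntegrable E volume t0 t :=
    ((continuousOn_maxError hT hftilc hfc).mono fun s hs =>
      hsub s (by rwa [uIcc_of_le ht.1] at hs)).intervalIntegrable
  refine Finset.sup'_le _ _ fun i hi => ?_
  replace hi : i ≤ N := Finset.mem_range_succ_iff.1 hi
  have hTi := Tgrid_mem_Icc hT hi
  have hdrift : ∀ s ∈ Icc t0 tstar,
      |(discreteDrift t0 Tstar N σ γ κ i s fun k => ftil k s) -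
        hjmDrift σ s (Tgrid t0 Tstar N i) (f s)| ≤ A * E s + d * (C * ε) := fun s hs =>
    (abs_sub_le _
      (discreteDrift t0 Tstar N σ γ κ i s fun k => f s (Tgrid t0 Tstar N k)) _).trans
      (add_le_add
        ((abs_discreteDrift_sub_le hT hN hC hL hΓ hσ hσL (hγ · s) (hκ s hs i hi) hi
          fun k hk => abs_sub_le_maxError hk s).trans_eq (by ring))
        (abs_discreteDrift_sub_hjmDrift_le hC hσ (hquad s hs i hi)))
  have hDint := intervalIntegrable_of_abs_le
    (aemeasurable_discreteDrift hσm hγm (hκm i) (fun s hs => hκ s hs i hi) hi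
      hftilc).aestronglyMeasurable
    (fun s hs => abs_discreteDrift_le hT hN hC hΓ hσ (hγ · s) (hκ s hs i hi) _) ht
  have hHint := intervalIntegrable_of_abs_le (aestronglyMeasurable_hjmDrift hσm htT hfc hTi)
    (fun s hs => abs_hjmDrift_le hC hσ ⟨hs.1, hs.2.trans htT⟩ hTi (f s)) ht
  rw [hftil i hi t ht, hf t ht _ hTi, add_sub_add_left_eq_sub]
  calc _ ≤ ∫ s in t0..t, (A * E s + d * (C * ε)) :=
        abs_integral_sub_integral_le ht.1 hDint hHint
          ((hEint.const_mul A).add intervalIntegrable_const) fun s hs => hdrift s (hsub s hs)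
    _ = A * (∫ s in t0..t, E s) + d * (C * ε) * (t - t0) := by
        rw [intervalIntegral.integral_add (hEint.const_mul A) intervalIntegrable_const,
          intervalIntegral.integral_const_mul, intervalIntegral.integral_const, smul_eq_mul]
        ring
    _ ≤ A * (∫ s in t0..t, E s) + d * (C * ε) * (tstar - t0) := by
        gcongr
        exact ht.2

theorem T_discretization_order_p_general
    (t0 tstar Tstar : ℝ) (d : ℕ) (C L Γ C₁ p : ℝ)
    (h1 : t0 < tstar) (h2 : tstar ≤ Tstar) (hd : 1 ≤ d)
    (hC : 0 < C) (hL : 0 ≤ L) (hΓ : 0 ≤ Γ) (hC₁ : 0 < C₁) :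
    ∃ K > 0,
      ∀ σ : Fin d → ℝ → ℝ → ℝ → ℝ,
        (∀ j, Measurable fun q : ℝ × ℝ × ℝ => σ j q.1 q.2.1 q.2.2) →
        (∀ j t T z, |σ j t T z| ≤ C) →
        (∀ j t T z z', |σ j t T z - σ j t T z'| ≤ L * |z - z'|) →
      ∀ f0 : ℝ → ℝ, ContinuousOn f0 (Set.Icc t0 Tstar) →
      ∀ f : ℝ → ℝ → ℝ,
        ContinuousOn (fun q : ℝ × ℝ => f q.1 q.2)
          (Set.Icc t0 tstar ×ˢ Set.Icc t0 Tstar) →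
        (∀ t ∈ Set.Icc t0 tstar, ∀ T ∈ Set.Icc t0 Tstar,
          f t T = f0 T + ∫ s in t0..t, ∑ j : Fin d,
            σ j s T (f s T) * ∫ u in s..T, σ j s u (f s u)) →
      ∀ N : ℕ, 0 < N →
      ∀ γ : ℕ → ℝ → ℝ, (∀ k, Measurable (γ k)) → (∀ k s, |γ k s| ≤ Γ) →
      ∀ κ : ℝ → ℕ → ℕ, (∀ i, Measurable fun s => κ s i) →
        (∀ s ∈ Set.Icc t0 tstar, ∀ i ≤ N,
          ellIdx t0 Tstar N s ≤ κ s i ∧ κ s i ≤ N) →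
      ∀ ftil : ℕ → ℝ → ℝ,
        (∀ i ≤ N, ContinuousOn (ftil i) (Set.Icc t0 tstar)) →
        -- the maturity-discretized system of integral equations
        (∀ i ≤ N, ∀ t ∈ Set.Icc t0 tstar,
          ftil i t = f0 (Tgrid t0 Tstar N i) + ∫ s in t0..t, ∑ j : Fin d,
            σ j s (Tgrid t0 Tstar N i) (ftil i s) *
              (((Tstar - t0) / N) *
                ∑ k ∈ Finset.Icc (ellIdx t0 Tstar N s) (κ s i),
                  γ k s * σ j s (Tgrid t0 Tstar N k) (ftil k s))) →
        -- the quadrature has order `p` along the exact solution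
        (∀ s ∈ Set.Icc t0 tstar, ∀ i ≤ N, ∀ j : Fin d,
          |((Tstar - t0) / N) *
              ∑ k ∈ Finset.Icc (ellIdx t0 Tstar N s) (κ s i),
                γ k s * σ j s (Tgrid t0 Tstar N k) (f s (Tgrid t0 Tstar N k)) -
            ∫ u in s..(Tgrid t0 Tstar N i), σ j s u (f s u)|
              ≤ C₁ * ((Tstar - t0) / N) ^ p) →
      ∀ t ∈ Set.Icc t0 tstar, ∀ i ≤ N,
        |ftil i t - f t (Tgrid t0 Tstar N i)| ≤ K * ((Tstar - t0) / N) ^ p := by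
  have hδ : 0 ≤ Tstar - t0 := sub_nonneg.2 (h1.le.trans h2)
  set A : ℝ := d * (4 * (Tstar - t0) * Γ * L * C)
  have hA : 0 ≤ A := by positivity
  refine ⟨d * (C * C₁) * (tstar - t0) * exp (A * (tstar - t0)),
    mul_pos (mul_pos (mul_pos (by exact_mod_cast hd) (mul_pos hC hC₁)) (sub_pos.2 h1))
      (exp_pos _), ?_⟩
  intro σ hσm hσ hσL f0 _ f hfc hf N hN γ hγm hγ κ hκm hκ ftil hftilc hftil hquad t ht i hi
  have hΔp : 0 ≤ ((Tstar - t0) / N) ^ p := rpow_nonneg (div_nonneg hδ N.cast_nonneg) p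
  have hE := le_mul_exp_of_le_mul_integral_add
    (continuousOn_maxError (h1.le.trans h2) hftilc hfc) (fun s _ => maxError_nonneg s) hA
    (maxError_le_mul_integral_add hN h2 hC.le hL hΓ (mul_nonneg hC₁.le hΔp) hσm hσ hσL hfc hf
      hγm hγ hκm (fun s hs i hi => (hκ s hs i hi).2) hftilc hftil hquad) t ht
  calc |ftil i t - f t (Tgrid t0 Tstar N i)| ≤ maxError t0 Tstar N f ftil t :=
        abs_sub_le_maxError hi t
    _ ≤ d * (C * (C₁ * ((Tstar - t0) / N) ^ p)) * (tstar - t0) * exp (A * (t - t0)) := hE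
    _ ≤ d * (C * (C₁ * ((Tstar - t0) / N) ^ p)) * (tstar - t0) * exp (A * (tstar - t0)) := by
        gcongr
        exact ht.2
    _ = _ := by ring

/-- Noise-free analogue of the paper's Theorem 4.1: if the quadrature used in the
maturity-discretized HJM system has order `p` along the exact solution, then the
`T`-discretization `f̃ⁱ` converges to `f(·, T_i)` with order `Δ^p`, with a constant
depending only on `C, L, Γ, C₁, d, t* − t0, T* − t0` (not on `Δ` or `N`). -/
theorem T_discretization_order_p
    (t0 tstar Tstar : ℝ) (d : ℕ) (C L Γ C₁ p : ℝ)
    (h1 : t0 < tstar) (h2 : tstar ≤ Tstar) (hd : 1 ≤ d)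
    (hC : 0 < C) (hL : 0 ≤ L) (hΓ : 0 ≤ Γ) (hC₁ : 0 < C₁) (hp : 0 < p) :
    ∃ K > 0,
      ∀ σ : Fin d → ℝ → ℝ → ℝ → ℝ,
        (∀ j, Measurable fun q : ℝ × ℝ × ℝ => σ j q.1 q.2.1 q.2.2) →
        (∀ j t T z, |σ j t T z| ≤ C) →
        (∀ j t T z z', |σ j t T z - σ j t T z'| ≤ L * |z - z'|) →
      ∀ f0 : ℝ → ℝ, ContinuousOn f0 (Set.Icc t0 Tstar) →
      ∀ f : ℝ → ℝ → ℝ,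
        ContinuousOn (fun q : ℝ × ℝ => f q.1 q.2)
          (Set.Icc t0 tstar ×ˢ Set.Icc t0 Tstar) →
        (∀ t ∈ Set.Icc t0 tstar, ∀ T ∈ Set.Icc t0 Tstar,
          f t T = f0 T + ∫ s in t0..t, ∑ j : Fin d,
            σ j s T (f s T) * ∫ u in s..T, σ j s u (f s u)) →
      ∀ N : ℕ, 0 < N →
      ∀ γ : ℕ → ℝ → ℝ, (∀ k, Measurable (γ k)) → (∀ k s, |γ k s| ≤ Γ) →
      ∀ κ : ℝ → ℕ → ℕ, (∀ i, Measurable fun s => κ s i) →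
        (∀ s ∈ Set.Icc t0 tstar, ∀ i ≤ N,
          ellIdx t0 Tstar N s ≤ κ s i ∧ κ s i ≤ N) →
      ∀ ftil : ℕ → ℝ → ℝ,
        (∀ i ≤ N, ContinuousOn (ftil i) (Set.Icc t0 tstar)) →
        -- the maturity-discretized system of integral equations
        (∀ i ≤ N, ∀ t ∈ Set.Icc t0 tstar,
          ftil i t = f0 (Tgrid t0 Tstar N i) + ∫ s in t0..t, ∑ j : Fin d,
            σ j s (Tgrid t0 Tstar N i) (ftil i s) *
              (((Tstar - t0) / N) *
                ∑ k ∈ Finset.Icc (ellIdx t0 Tstar N s) (κ s i),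
                  γ k s * σ j s (Tgrid t0 Tstar N k) (ftil k s))) →
        -- the quadrature has order `p` along the exact solution
        (∀ s ∈ Set.Icc t0 tstar, ∀ i ≤ N, ∀ j : Fin d,
          |((Tstar - t0) / N) *
              ∑ k ∈ Finset.Icc (ellIdx t0 Tstar N s) (κ s i),
                γ k s * σ j s (Tgrid t0 Tstar N k) (f s (Tgrid t0 Tstar N k)) -
            ∫ u in s..(Tgrid t0 Tstar N i), σ j s u (f s u)|
              ≤ C₁ * ((Tstar - t0) / N) ^ p) →
      ∀ t ∈ Set.Icc t0 tstar, ∀ i ≤ N,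
        |ftil i t - f t (Tgrid t0 Tstar N i)| ≤ K * ((Tstar - t0) / N) ^ p :=
  T_discretization_order_p_general t0 tstar Tstar d C L Γ C₁ p h1 h2 hd hC hL hΓ hC₁
end

section
/- For every c ∈ ℝ there exists a constant K > 0 depending only on c, A, B, B0, d and t* − t0 (and not on h, M, k, or the index i) such that E exp(c |f̄_k^i|) ≤ K for all indices i ∈ I and all k = 0,…,M. -/
/-!
A sign `ξ = ±1` of probability `1 / 2` each that is independent of `W ≥ 0` and `t` satisfies
`E[W exp (t ξ)] = E[W cosh t]`, by splitting over the two level sets of `ξ`.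
Peeling off the `d` increments one at a time, with `cosh (s √h b) ≤ exp (s² B² h / 2)`, shows that
`E exp (s f̄_k)` grows by at most the factor `exp ((|s| A + d s² B² / 2) h)` per step; since
`k h ≤ t* - t0` this is uniform, and `exp (c |x|) ≤ exp (c x) + exp (-c x)` handles the absolute
value.
-/

open MeasureTheory ProbabilityTheory Real
open scoped ENNReal

section Rademacher

variable {Ω : Type*} {m mΩ : MeasurableSpace Ω} {μ : Measure Ω} [IsProbabilityMeasure μ]

lemma ae_eq_one_or_eq_neg_one {ξ : Ω → ℝ} (hξ : Measurable ξ)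
    (h1 : μ {ω | ξ ω = 1} = 1 / 2) (h2 : μ {ω | ξ ω = -1} = 1 / 2) :
    ∀ᵐ ω ∂μ, ξ ω = 1 ∨ ξ ω = -1 := by
  have hdisj : Disjoint {ω | ξ ω = 1} {ω | ξ ω = -1} :=
    Set.disjoint_left.2 fun ω h h' => by simp only [Set.mem_ofPred_eq] at h h'; linarith
  have hmeas : MeasurableSet ({ω | ξ ω = 1} ∪ {ω | ξ ω = -1}) :=
    (hξ (measurableSet_singleton _)).union (hξ (measurableSet_singleton _))
  have hunion : μ ({ω | ξ ω = 1} ∪ {ω | ξ ω = -1}) = 1 := by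
    rw [measure_union hdisj (hξ (measurableSet_singleton _)), h1, h2, one_div,
      ENNReal.inv_two_add_inv_two]
  exact (prob_compl_eq_zero_iff hmeas).2 hunion

lemma lintegral_mul_ofReal_exp_mul_eq_cosh (hm : m ≤ mΩ)
    {ξ : Ω → ℝ} (hξ : Measurable ξ) (hind : Indep m (MeasurableSpace.comap ξ inferInstance) μ)
    (h1 : μ {ω | ξ ω = 1} = 1 / 2) (h2 : μ {ω | ξ ω = -1} = 1 / 2)
    {W : Ω → ℝ≥0∞} (hW : Measurable[m] W) {t : Ω → ℝ} (ht : Measurable[m] t) :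
    ∫⁻ ω, W ω * ENNReal.ofReal (exp (t ω * ξ ω)) ∂μ =
      ∫⁻ ω, W ω * ENNReal.ofReal (cosh (t ω)) ∂μ := by
  set V : ℝ → Ω → ℝ≥0∞ := fun x ω => W ω * ENNReal.ofReal (exp (t ω * x))
  have hVm : ∀ x, Measurable[m] (V x) := fun x => by fun_prop
  have hV : ∀ x, Measurable (V x) := fun x => (hVm x).mono hm le_rfl
  have hsplit : ∀ x, μ {ω | ξ ω = x} = 1 / 2 →
      ∫⁻ ω, V x ω * {ω | ξ ω = x}.indicator 1 ω ∂μ = 2⁻¹ * ∫⁻ ω, V x ω ∂μ := by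
    intro x hx
    have hindicator : Measurable[MeasurableSpace.comap ξ inferInstance]
        ({ω | ξ ω = x}.indicator (1 : Ω → ℝ≥0∞)) :=
      (measurable_one.indicator (measurableSet_singleton x)).comp (comap_measurable ξ)
    rw [lintegral_mul_eq_lintegral_mul_lintegral_of_independent_measurableSpace hm
      (measurable_iff_comap_le.1 hξ) hind (hVm x) hindicator,
      lintegral_indicator_one (s := {ω | ξ ω = x}) (hξ (measurableSet_singleton x)), hx, one_div,
      mul_comm]
  have hae : (fun ω => W ω * ENNReal.ofReal (exp (t ω * ξ ω))) =ᵐ[μ] fun ω =>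
      V 1 ω * {ω | ξ ω = 1}.indicator 1 ω + V (-1) ω * {ω | ξ ω = -1}.indicator 1 ω := by
    filter_upwards [ae_eq_one_or_eq_neg_one hξ h1 h2] with ω hω
    rcases hω with hω | hω <;> norm_num [V, hω, Set.indicator]
  have hcosh : ∀ ω, W ω * ENNReal.ofReal (cosh (t ω)) = 2⁻¹ * V 1 ω + 2⁻¹ * V (-1) ω := by
    intro ω
    rw [cosh_eq, div_eq_inv_mul, ENNReal.ofReal_mul (by norm_num),
      ENNReal.ofReal_add (exp_pos _).le (exp_pos _).le, ENNReal.ofReal_inv_of_pos two_pos]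
    simp only [V, mul_one, mul_neg]
    norm_num
    ring
  have hV1 : Measurable fun ω => V 1 ω * {ω | ξ ω = 1}.indicator 1 ω :=
    (hV 1).mul (measurable_one.indicator (hξ (measurableSet_singleton 1)))
  rw [lintegral_congr_ae hae, lintegral_add_left hV1, hsplit 1 h1,
    hsplit (-1) h2, funext hcosh, lintegral_add_left ((hV 1).const_mul _),
    lintegral_const_mul _ (hV 1), lintegral_const_mul _ (hV (-1))]

lemma lintegral_mul_prod_ofReal_exp_mul_le {ι : Type*} [DecidableEq ι]
    {G : ι → MeasurableSpace Ω} (hG : ∀ j, G j ≤ mΩ) {η : ι → Ω → ℝ} (hη : ∀ j, Measurable (η j))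
    (hind : ∀ j, Indep (G j) (MeasurableSpace.comap (η j) inferInstance) μ)
    (h1 : ∀ j, μ {ω | η j ω = 1} = 1 / 2) (h2 : ∀ j, μ {ω | η j ω = -1} = 1 / 2)
    (hηG : ∀ i j, i ≠ j → Measurable[G j] (η i))
    {W : Ω → ℝ≥0∞} (hW : ∀ j, Measurable[G j] W)
    {t : ι → Ω → ℝ} (ht : ∀ i j, Measurable[G j] (t i)) {T : ℝ} (htT : ∀ i, ∀ᵐ ω ∂μ, |t i ω| ≤ T)
    (s : Finset ι) :
    ∫⁻ ω, W ω * ∏ i ∈ s, ENNReal.ofReal (exp (t i ω * η i ω)) ∂μ ≤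
      ENNReal.ofReal (cosh T) ^ s.card * ∫⁻ ω, W ω ∂μ := by
  induction s using Finset.induction_on with
  | empty => simp
  | @insert j s hj ih =>
    set V : Ω → ℝ≥0∞ := fun ω => W ω * ∏ i ∈ s, ENNReal.ofReal (exp (t i ω * η i ω))
    have hVG : Measurable[G j] V := by
      refine (hW j).mul (Finset.measurable_prod _ fun i hi => ?_)
      have := hηG i j (ne_of_mem_of_not_mem hi hj)
      have := ht i j
      fun_prop
    have hcosh : ∀ᵐ ω ∂μ,
        V ω * ENNReal.ofReal (cosh (t j ω)) ≤ V ω * ENNReal.ofReal (cosh T) := by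
      filter_upwards [htT j] with ω hω
      gcongr
      exact cosh_le_cosh.2 (hω.trans (le_abs_self T))
    calc ∫⁻ ω, W ω * ∏ i ∈ insert j s, ENNReal.ofReal (exp (t i ω * η i ω)) ∂μ
        = ∫⁻ ω, V ω * ENNReal.ofReal (exp (t j ω * η j ω)) ∂μ := by
          simp only [Finset.prod_insert hj, V]
          congr 1; funext ω; ring
      _ = ∫⁻ ω, V ω * ENNReal.ofReal (cosh (t j ω)) ∂μ :=
          lintegral_mul_ofReal_exp_mul_eq_cosh (hG j) (hη j) (hind j) (h1 j) (h2 j) hVG (ht j j)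
      _ ≤ ∫⁻ ω, V ω * ENNReal.ofReal (cosh T) ∂μ := lintegral_mono_ae hcosh
      _ = (∫⁻ ω, V ω ∂μ) * ENNReal.ofReal (cosh T) :=
          lintegral_mul_const _ (hVG.mono (hG j) le_rfl)
      _ ≤ ENNReal.ofReal (cosh T) ^ s.card * (∫⁻ ω, W ω ∂μ) * ENNReal.ofReal (cosh T) := by
          gcongr
      _ = ENNReal.ofReal (cosh T) ^ (insert j s).card * ∫⁻ ω, W ω ∂μ := by
          rw [Finset.card_insert_of_notMem hj]; ring

lemma lintegral_ofReal_exp_step_le {ι : Type*} [Fintype ι] {G : ι → MeasurableSpace Ω}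
    (hmG : ∀ j, m ≤ G j) (hG : ∀ j, G j ≤ mΩ) {η : ι → Ω → ℝ} (hη : ∀ j, Measurable (η j))
    (hind : ∀ j, Indep (G j) (MeasurableSpace.comap (η j) inferInstance) μ)
    (h1 : ∀ j, μ {ω | η j ω = 1} = 1 / 2) (h2 : ∀ j, μ {ω | η j ω = -1} = 1 / 2)
    (hηG : ∀ i j, i ≠ j → Measurable[G j] (η i))
    {X a : Ω → ℝ} {b : ι → Ω → ℝ} (hX : Measurable[m] X) (ha : Measurable[m] a)
    (hb : ∀ j, Measurable[m] (b j)) {A B h : ℝ} (hh : 0 ≤ h)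
    (haA : ∀ᵐ ω ∂μ, |a ω| ≤ A * h) (hbB : ∀ j, ∀ᵐ ω ∂μ, |b j ω| ≤ B) (s : ℝ) :
    ∫⁻ ω, ENNReal.ofReal (exp (s * (X ω + a ω + √h * ∑ j, b j ω * η j ω))) ∂μ ≤
      ENNReal.ofReal (exp (|s| * A * h + Fintype.card ι * (s ^ 2 * B ^ 2 * h) / 2)) *
        ∫⁻ ω, ENNReal.ofReal (exp (s * X ω)) ∂μ := by
  classical
  set t : ι → Ω → ℝ := fun j ω => s * √h * b j ω
  set T : ℝ := |s| * √h * B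
  have hsplit : ∀ ω, ENNReal.ofReal (exp (s * (X ω + a ω + √h * ∑ j, b j ω * η j ω))) =
      ENNReal.ofReal (exp (s * (X ω + a ω))) *
        ∏ j, ENNReal.ofReal (exp (t j ω * η j ω)) := by
    intro ω
    rw [← ENNReal.ofReal_prod_of_nonneg fun j _ => (exp_pos _).le,
      ← ENNReal.ofReal_mul (exp_pos _).le, ← exp_sum, ← exp_add, Finset.mul_sum]
    congr 2
    simp only [t, mul_add, Finset.mul_sum]
    congr 1
    exact Finset.sum_congr rfl fun j _ => by ring
  have htT : ∀ j, ∀ᵐ ω ∂μ, |t j ω| ≤ T := fun j => by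
    filter_upwards [hbB j] with ω hω
    simp only [t, T, abs_mul, abs_of_nonneg (Real.sqrt_nonneg h)]
    gcongr
  have hdrift : ∫⁻ ω, ENNReal.ofReal (exp (s * (X ω + a ω))) ∂μ ≤
      ENNReal.ofReal (exp (|s| * A * h)) * ∫⁻ ω, ENNReal.ofReal (exp (s * X ω)) ∂μ := by
    rw [← lintegral_const_mul' _ _ ENNReal.ofReal_ne_top]
    refine lintegral_mono_ae ?_
    filter_upwards [haA] with ω hω
    rw [← ENNReal.ofReal_mul (exp_pos _).le, ← exp_add]
    gcongr
    nlinarith [abs_mul_abs_self s, le_abs_self (s * a ω), abs_mul s (a ω), abs_nonneg s]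
  have hcosh : cosh T ^ Fintype.card ι ≤ exp (Fintype.card ι * (s ^ 2 * B ^ 2 * h) / 2) := by
    have hT : T ^ 2 / 2 = s ^ 2 * B ^ 2 * h / 2 := by
      simp only [T, mul_pow, sq_abs, Real.sq_sqrt hh]; ring
    calc cosh T ^ Fintype.card ι ≤ exp (T ^ 2 / 2) ^ Fintype.card ι := by
          gcongr; exact cosh_le_exp_half_sq T
      _ = _ := by rw [hT, ← exp_nat_mul]; ring_nf
  calc ∫⁻ ω, ENNReal.ofReal (exp (s * (X ω + a ω + √h * ∑ j, b j ω * η j ω))) ∂μ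
      = ∫⁻ ω, ENNReal.ofReal (exp (s * (X ω + a ω))) *
          ∏ j, ENNReal.ofReal (exp (t j ω * η j ω)) ∂μ := lintegral_congr hsplit
    _ ≤ ENNReal.ofReal (cosh T) ^ Fintype.card ι *
          ∫⁻ ω, ENNReal.ofReal (exp (s * (X ω + a ω))) ∂μ := by
        refine lintegral_mul_prod_ofReal_exp_mul_le hG hη hind h1 h2 hηG (fun j => ?_)
          (fun i j => ?_) htT Finset.univ
        · have := hX.mono (hmG j) le_rfl
          have := ha.mono (hmG j) le_rfl
          fun_prop
        · exact ((hb i).const_mul _).mono (hmG j) le_rfl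
    _ ≤ ENNReal.ofReal (exp (Fintype.card ι * (s ^ 2 * B ^ 2 * h) / 2)) *
          (ENNReal.ofReal (exp (|s| * A * h)) * ∫⁻ ω, ENNReal.ofReal (exp (s * X ω)) ∂μ) := by
        rw [← ENNReal.ofReal_pow (cosh_pos T).le]
        gcongr
    _ = _ := by
        rw [← mul_assoc, ← ENNReal.ofReal_mul (exp_pos _).le, ← exp_add, add_comm]

end Rademacher

section Scheme

variable {Ω : Type*} {mΩ : MeasurableSpace Ω} {μ : Measure Ω} {d : ℕ} {ξ : Fin d → ℕ → Ω → ℝ}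

lemma lintegral_ofReal_exp_mul_abs_le {X : Ω → ℝ} (hX : Measurable X) (c : ℝ) :
    ∫⁻ ω, ENNReal.ofReal (exp (c * |X ω|)) ∂μ ≤
      ∫⁻ ω, ENNReal.ofReal (exp (c * X ω)) ∂μ + ∫⁻ ω, ENNReal.ofReal (exp (-c * X ω)) ∂μ := by
  rw [← lintegral_add_left (by fun_prop)]
  refine lintegral_mono fun ω => ?_
  rw [← ENNReal.ofReal_add (exp_pos _).le (exp_pos _).le]
  refine ENNReal.ofReal_le_ofReal ?_
  rcases abs_choice (X ω) with hX | hX <;> rw [hX]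
  · linarith [exp_pos (-c * X ω)]
  · rw [show c * -X ω = -c * X ω by ring]
    linarith [exp_pos (c * X ω)]

abbrev incrementFiltration (ξ : Fin d → ℕ → Ω → ℝ) (k : ℕ) : MeasurableSpace Ω :=
  ⨆ (j : Fin d) (l : ℕ) (_ : 1 ≤ l) (_ : l ≤ k), MeasurableSpace.comap (ξ j l) inferInstance

lemma comap_le_incrementFiltration {j : Fin d} {l k : ℕ} (hl : 1 ≤ l) (hlk : l ≤ k) :
    MeasurableSpace.comap (ξ j l) inferInstance ≤ incrementFiltration ξ k :=
  le_iSup_of_le j <| le_iSup_of_le l <| le_iSup_of_le hl <| le_iSup_of_le hlk le_rfl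

lemma incrementFiltration_mono : Monotone (incrementFiltration ξ) := fun _ _ hkn =>
  iSup_le fun _ => iSup_le fun _ => iSup_le fun hl => iSup_le fun hlk =>
    comap_le_incrementFiltration hl (hlk.trans hkn)

lemma incrementFiltration_le (hξ : ∀ j l, Measurable (ξ j l)) (k : ℕ) :
    incrementFiltration ξ k ≤ mΩ :=
  iSup_le fun j => iSup_le fun l => iSup_le fun _ => iSup_le fun _ => (hξ j l).comap_le

lemma exists_indep_increment (hξ : ∀ j l, Measurable (ξ j l)) {M : ℕ}
    (hind : iIndepFun (fun q : Fin d × Fin M => ξ q.1 (q.2.1 + 1)) μ) {k : ℕ} (hk : k < M) :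
    ∃ G : Fin d → MeasurableSpace Ω, (∀ j, incrementFiltration ξ k ≤ G j) ∧ (∀ j, G j ≤ mΩ) ∧
      (∀ j, Indep (G j) (MeasurableSpace.comap (ξ j (k + 1)) inferInstance) μ) ∧
      ∀ i j, i ≠ j → Measurable[G j] (ξ i (k + 1)) := by
  set m : Fin d × Fin M → MeasurableSpace Ω :=
    fun q => MeasurableSpace.comap (ξ q.1 (q.2.1 + 1)) inferInstance
  have hm : ∀ q, m q ≤ mΩ := fun q => (hξ _ _).comap_le
  refine ⟨fun j => ⨆ q ∈ ({(j, ⟨k, hk⟩)}ᶜ : Set _), m q, fun j => ?_,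
    fun j => iSup₂_le fun q _ => hm q, fun j => ?_, fun i j hij => ?_⟩
  · refine iSup_le fun i => iSup_le fun l => iSup_le fun hl => iSup_le fun hlk => ?_
    refine le_iSup₂_of_le (i, ⟨l - 1, by omega⟩) (by simp; omega) (le_of_eq ?_)
    simp only [m, Nat.sub_add_cancel hl]
  · have := indep_iSup_of_disjoint hm hind.iIndep (disjoint_compl_left (a := {(j, ⟨k, hk⟩)}))
    rwa [iSup_singleton] at this
  · exact measurable_iff_comap_le.2 (le_iSup₂_of_le (i, ⟨k, hk⟩) (by simpa using hij) le_rfl)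

variable {M : ℕ} {x0 h : ℝ} {a : ℕ → Ω → ℝ} {b : ℕ → Fin d → Ω → ℝ} {f : ℕ → Ω → ℝ}

lemma measurable_scheme (ha : ∀ k < M, Measurable[incrementFiltration ξ k] (a k))
    (hb : ∀ k < M, ∀ j, Measurable[incrementFiltration ξ k] (b k j)) (hf0 : ∀ ω, f 0 ω = x0)
    (hf : ∀ k < M, ∀ ω, f (k + 1) ω = f k ω + a k ω + √h * ∑ j, b k j ω * ξ j (k + 1) ω) :
    ∀ k ≤ M, Measurable[incrementFiltration ξ k] (f k) := by
  intro k
  induction k with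
  | zero => intro _; rw [funext hf0]; exact measurable_const
  | succ k ih =>
    intro hk
    have hle := incrementFiltration_mono (ξ := ξ) k.le_succ
    rw [funext (hf k hk)]
    refine (((ih (Nat.le_of_succ_le hk)).mono hle le_rfl).add ((ha k hk).mono hle le_rfl)).add
      (Measurable.const_mul (Finset.measurable_sum _ fun j _ => ?_) _)
    exact ((hb k hk j).mono hle le_rfl).mul
      (measurable_iff_comap_le.2 (comap_le_incrementFiltration k.succ_pos le_rfl))

lemma lintegral_ofReal_exp_scheme_le [IsProbabilityMeasure μ] (hξ : ∀ j l, Measurable (ξ j l))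
    (hdist : ∀ j l, 1 ≤ l → l ≤ M → μ {ω | ξ j l ω = 1} = 1 / 2 ∧ μ {ω | ξ j l ω = -1} = 1 / 2)
    (hind : iIndepFun (fun q : Fin d × Fin M => ξ q.1 (q.2.1 + 1)) μ) {A B B0 : ℝ}
    (hh : 0 ≤ h) (hx0 : |x0| ≤ B0)
    (ha : ∀ k < M, Measurable[incrementFiltration ξ k] (a k))
    (hb : ∀ k < M, ∀ j, Measurable[incrementFiltration ξ k] (b k j))
    (haA : ∀ k < M, ∀ᵐ ω ∂μ, |a k ω| ≤ A * h) (hbB : ∀ k < M, ∀ j, ∀ᵐ ω ∂μ, |b k j ω| ≤ B)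
    (hf0 : ∀ ω, f 0 ω = x0)
    (hf : ∀ k < M, ∀ ω, f (k + 1) ω = f k ω + a k ω + √h * ∑ j, b k j ω * ξ j (k + 1) ω)
    (s : ℝ) :
    ∀ k ≤ M, ∫⁻ ω, ENNReal.ofReal (exp (s * f k ω)) ∂μ ≤
      ENNReal.ofReal (exp (|s| * B0 + k * (|s| * A * h + d * (s ^ 2 * B ^ 2 * h) / 2))) := by
  intro k
  induction k with
  | zero =>
    intro _
    simp only [hf0, lintegral_const, measure_univ, mul_one, CharP.cast_eq_zero, zero_mul, add_zero]
    refine ENNReal.ofReal_le_ofReal (exp_le_exp.2 ?_)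
    nlinarith [le_abs_self (s * x0), abs_mul s x0, abs_nonneg s]
  | succ k ih =>
    intro hk
    obtain ⟨G, hFG, hG, hindG, hξG⟩ := exists_indep_increment hξ hind hk
    have hstep := lintegral_ofReal_exp_step_le hFG hG (fun j => hξ j (k + 1)) hindG
      (fun j => (hdist j (k + 1) k.succ_pos hk).1) (fun j => (hdist j (k + 1) k.succ_pos hk).2)
      hξG (measurable_scheme ha hb hf0 hf k (Nat.le_of_succ_le hk)) (ha k hk) (hb k hk) hh
      (haA k hk) (hbB k hk) s
    rw [Fintype.card_fin] at hstep
    calc ∫⁻ ω, ENNReal.ofReal (exp (s * f (k + 1) ω)) ∂μ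
        = ∫⁻ ω, ENNReal.ofReal
            (exp (s * (f k ω + a k ω + √h * ∑ j, b k j ω * ξ j (k + 1) ω))) ∂μ := by
          simp only [hf k hk]
      _ ≤ _ := hstep
      _ ≤ ENNReal.ofReal (exp (|s| * A * h + d * (s ^ 2 * B ^ 2 * h) / 2)) *
            ENNReal.ofReal (exp (|s| * B0 + k * (|s| * A * h + d * (s ^ 2 * B ^ 2 * h) / 2))) := by
          gcongr; exact ih (Nat.le_of_succ_le hk)
      _ = _ := by
          rw [← ENNReal.ofReal_mul (exp_pos _).le, ← exp_add]
          push_cast; ring_nf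

end Scheme

theorem euler_scheme_exponential_moment_bound_general
    (c A B B0 t0 tstar : ℝ) (d : ℕ)
    (hA : 0 ≤ A) (ht : t0 < tstar) :
    ∃ K > 0,
      ∀ M : ℕ, 0 < M →
      ∀ (Ω : Type) (_ : MeasurableSpace Ω) (μ : Measure Ω), IsProbabilityMeasure μ →
      ∀ ξ : Fin d → ℕ → Ω → ℝ,
        (∀ j k, Measurable (ξ j k)) →
        -- symmetric Bernoulli (±1) distribution
        (∀ j k, 1 ≤ k → k ≤ M →
          μ {ω | ξ j k ω = 1} = 1/2 ∧ μ {ω | ξ j k ω = -1} = 1/2) →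
        -- independence of the family {ξ_{j,k} : 1 ≤ j ≤ d, 1 ≤ k ≤ M}
        iIndepFun
          (fun q : Fin d × Fin M => ξ q.1 (q.2.1 + 1)) μ →
      ∀ (I : Type) (_ : Fintype I),
      ∀ finit : I → ℝ, (∀ i, |finit i| ≤ B0) →
      ∀ (a : ℕ → I → Ω → ℝ) (b : ℕ → I → Fin d → Ω → ℝ)
        (fbar : ℕ → I → Ω → ℝ),
        let h : ℝ := (tstar - t0) / M
        let F : ℕ → MeasurableSpace Ω := fun k =>
          ⨆ (j : Fin d) (l : ℕ) (_ : 1 ≤ l) (_ : l ≤ k),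
            MeasurableSpace.comap (ξ j l) inferInstance
        -- coefficients are `F_k`-measurable and a.s. bounded
        (∀ k < M, ∀ i, Measurable[F k] (a k i)) →
        (∀ k < M, ∀ i j, Measurable[F k] (b k i j)) →
        (∀ k < M, ∀ i, ∀ᵐ ω ∂μ, |a k i ω| ≤ A * h) →
        (∀ k < M, ∀ i j, ∀ᵐ ω ∂μ, |b k i j ω| ≤ B) →
        -- the scheme
        (∀ i ω, fbar 0 i ω = finit i) →
        (∀ k < M, ∀ i ω, fbar (k + 1) i ω =
          fbar k i ω + a k i ω +
            Real.sqrt h * ∑ j : Fin d, b k i j ω * ξ j (k + 1) ω) →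
        -- uniform exponential moment bound
        ∀ (i : I), ∀ k ≤ M,
          ∫⁻ ω, ENNReal.ofReal (Real.exp (c * |fbar k i ω|)) ∂μ
            ≤ ENNReal.ofReal K := by
  set E := exp (|c| * B0 + (tstar - t0) * (|c| * A + d * (c ^ 2 * B ^ 2) / 2))
  refine ⟨2 * E, by positivity, ?_⟩
  intro M hM Ω _ μ _ ξ hξ hdist hind I _ finit hfinit a b fbar h F ha hb haA hbB hf0 hf i k hk
  have hh : 0 ≤ h := div_nonneg (sub_nonneg.2 ht.le) M.cast_nonneg
  have hkh : k * h ≤ tstar - t0 := by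
    rw [mul_div_assoc', div_le_iff₀ (Nat.cast_pos.2 hM), mul_comm (tstar - t0)]
    exact mul_le_mul_of_nonneg_right (Nat.cast_le.2 hk) (sub_nonneg.2 ht.le)
  have hmoment : ∀ s : ℝ, |s| = |c| → s ^ 2 = c ^ 2 →
      ∫⁻ ω, ENNReal.ofReal (exp (s * fbar k i ω)) ∂μ ≤ ENNReal.ofReal E := by
    intro s hs hs2
    refine (lintegral_ofReal_exp_scheme_le (f := fun k => fbar k i) hξ hdist hind hh (hfinit i)
      (fun k hk => ha k hk i) (fun k hk => hb k hk i) (fun k hk => haA k hk i)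
      (fun k hk => hbB k hk i) (hf0 i) (fun k hk => hf k hk i) s k hk).trans (ENNReal.ofReal_le_ofReal (exp_le_exp.2 ?_))
    have hrate : 0 ≤ |c| * A + d * (c ^ 2 * B ^ 2) / 2 := by positivity
    rw [hs, hs2]
    linear_combination mul_le_mul_of_nonneg_right hkh hrate
  have hf_meas : Measurable (fbar k i) :=
    (measurable_scheme (f := fun k => fbar k i) (fun k hk => ha k hk i) (fun k hk => hb k hk i)
      (hf0 i) (fun k hk => hf k hk i) k hk).mono (incrementFiltration_le hξ k) le_rfl
  calc ∫⁻ ω, ENNReal.ofReal (exp (c * |fbar k i ω|)) ∂μ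
      ≤ ∫⁻ ω, ENNReal.ofReal (exp (c * fbar k i ω)) ∂μ +
          ∫⁻ ω, ENNReal.ofReal (exp (-c * fbar k i ω)) ∂μ :=
        lintegral_ofReal_exp_mul_abs_le hf_meas c
    _ ≤ ENNReal.ofReal E + ENNReal.ofReal E :=
        add_le_add (hmoment c rfl rfl) (hmoment (-c) (abs_neg c) (neg_sq c))
    _ = ENNReal.ofReal (2 * E) := by
        rw [← ENNReal.ofReal_add (by positivity) (by positivity), two_mul]

/-- Uniform exponential moment bound (the paper's Assumption 3.1) for the weak
Euler-type scheme `f̄_{k+1}^i = f̄_k^i + a_k^i + √h Σ_j b_k^{i,j} ξ_{j,k+1}` driven by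
independent `±1` random variables, with `F_k`-measurable coefficients satisfying
`|a_k^i| ≤ A h`, `|b_k^{i,j}| ≤ B`, and deterministic initial data bounded by `B0`. -/
theorem euler_scheme_exponential_moment_bound
    (c A B B0 t0 tstar : ℝ) (d : ℕ)
    (hd : 0 < d) (hA : 0 ≤ A) (hB : 0 ≤ B) (hB0 : 0 ≤ B0) (ht : t0 < tstar) :
    ∃ K > 0,
      ∀ M : ℕ, 0 < M →
      ∀ (Ω : Type) (_ : MeasurableSpace Ω) (μ : Measure Ω), IsProbabilityMeasure μ →
      ∀ ξ : Fin d → ℕ → Ω → ℝ,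
        (∀ j k, Measurable (ξ j k)) →
        -- symmetric Bernoulli (±1) distribution
        (∀ j k, 1 ≤ k → k ≤ M →
          μ {ω | ξ j k ω = 1} = 1/2 ∧ μ {ω | ξ j k ω = -1} = 1/2) →
        -- independence of the family {ξ_{j,k} : 1 ≤ j ≤ d, 1 ≤ k ≤ M}
        iIndepFun
          (fun q : Fin d × Fin M => ξ q.1 (q.2.1 + 1)) μ →
      ∀ (I : Type) (_ : Fintype I),
      ∀ finit : I → ℝ, (∀ i, |finit i| ≤ B0) →
      ∀ (a : ℕ → I → Ω → ℝ) (b : ℕ → I → Fin d → Ω → ℝ)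
        (fbar : ℕ → I → Ω → ℝ),
        let h : ℝ := (tstar - t0) / M
        let F : ℕ → MeasurableSpace Ω := fun k =>
          ⨆ (j : Fin d) (l : ℕ) (_ : 1 ≤ l) (_ : l ≤ k),
            MeasurableSpace.comap (ξ j l) inferInstance
        -- coefficients are `F_k`-measurable and a.s. bounded
        (∀ k < M, ∀ i, Measurable[F k] (a k i)) →
        (∀ k < M, ∀ i j, Measurable[F k] (b k i j)) →
        (∀ k < M, ∀ i, ∀ᵐ ω ∂μ, |a k i ω| ≤ A * h) →
        (∀ k < M, ∀ i j, ∀ᵐ ω ∂μ, |b k i j ω| ≤ B) →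
        -- the scheme
        (∀ i ω, fbar 0 i ω = finit i) →
        (∀ k < M, ∀ i ω, fbar (k + 1) i ω =
          fbar k i ω + a k i ω +
            Real.sqrt h * ∑ j : Fin d, b k i j ω * ξ j (k + 1) ω) →
        -- uniform exponential moment bound
        ∀ (i : I), ∀ k ≤ M,
          ∫⁻ ω, ENNReal.ofReal (Real.exp (c * |fbar k i ω|)) ∂μ
            ≤ ENNReal.ofReal K :=
  euler_scheme_exponential_moment_bound_general c A B B0 t0 tstar d hA ht
end
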